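/- arXiv:1503.06211 — 7 statements merged into one kernel-verified Lean document; each statement's English description precedes it below -/
import Mathlib

section
/- Let b > 0 and 0 ≤ α < π/2, and let f be holomorphic on the sector S_α = {w ∈ ℂ : w ≠ 0, α − π/2 < arg w < π/2 − α}. Suppose that for every σ ∈ (0, b) and every θ ∈ (α − π/2, π/2 − α) one has ∫_0^∞ |f(e^{iθ} x)|·x^{σ − 1} dx < ∞. Then for every λ > 0, every σ ∈ (0, b) and every θ ∈ (α − π/2, π/2 − α) one has ∫_0^∞ e^{−λ t}·t^{σ − 1}·( ∫_0^t e^{λ x}·|f(e^{iθ} x)| dx ) dt < ∞. -/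
/-!
By Tonelli, the iterated integral equals `∫_0^∞ |f(e^{iθ}x)| K(x) dx` with
`K(x) = e^{λx} ∫_x^∞ e^{-λt} t^{σ-1} dt = ∫_0^∞ e^{-λu} (u + x)^{σ-1} du`.
For `σ ≤ 1` one has `K(x) ≤ x^{σ-1}/λ`, and for `σ ≥ 1` the inequality
`(u + x)^{σ-1} ≤ 2^{σ-1} (u^{σ-1} + x^{σ-1})` gives `K(x) ≲ x^{σ-1} + 1`.
So `K(x) ≲ x^{σ-1} + x^{min σ 1 - 1}`, and both weights are covered by the hypothesis.
-/

open Complex MeasureTheory Real Set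

lemma Real.add_rpow_le_two_rpow_mul_rpow_add_rpow {a b p : ℝ} (ha : 0 ≤ a) (hb : 0 ≤ b)
    (hp : 0 ≤ p) : (a + b) ^ p ≤ 2 ^ p * (a ^ p + b ^ p) := calc
  (a + b) ^ p ≤ (2 * max a b) ^ p := by
    gcongr; linarith [le_max_left a b, le_max_right a b]
  _ = 2 ^ p * max (a ^ p) (b ^ p) := by
    rw [mul_rpow zero_le_two (ha.trans (le_max_left a b)), rpow_max ha hb hp]
  _ ≤ 2 ^ p * (a ^ p + b ^ p) := by
    gcongr; exact max_le_add_of_nonneg (rpow_nonneg ha p) (rpow_nonneg hb p)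

lemma integral_comp_add_right_Ioi {E : Type*} [NormedAddCommGroup E] [NormedSpace ℝ E]
    (F : ℝ → E) (a d : ℝ) : ∫ u in Ioi a, F (u + d) = ∫ t in Ioi (a + d), F t := by
  rw [← (measurePreserving_add_right volume d).setIntegral_preimage_emb
    (measurableEmbedding_addRight d) F (Ioi (a + d)), preimage_add_const_Ioi,
    add_sub_cancel_right]

lemma integral_Ioi_norm_exp_neg_mul_mul_rpow_mul_exp {l s x : ℝ} (hx : 0 ≤ x) :
    (∫ t in Ioi x, ‖Real.exp (-l * t) * t ^ s‖) * Real.exp (l * x) =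
      ∫ u in Ioi 0, Real.exp (-l * u) * (u + x) ^ s := by
  rw [setIntegral_congr_fun measurableSet_Ioi fun t ht => Real.norm_of_nonneg
      (mul_nonneg (Real.exp_nonneg _) (rpow_nonneg (hx.trans (le_of_lt ht)) s)),
    ← zero_add x, ← integral_comp_add_right_Ioi, zero_add, ← integral_mul_const]
  congr 1 with u
  rw [show -l * (u + x) = -l * u + -(l * x) by ring, Real.exp_add, Real.exp_neg]
  field_simp

lemma integral_exp_neg_mul_Ioi_zero {l : ℝ} (hl : 0 < l) :
    ∫ u in Ioi 0, Real.exp (-l * u) = 1 / l := by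
  rw [integral_exp_mul_Ioi (neg_neg_of_pos hl)]
  simp [neg_div]

lemma integral_exp_neg_mul_mul_add_rpow_le_of_nonpos {l s x : ℝ} (hl : 0 < l) (hx : 0 < x)
    (hs : s ≤ 0) : ∫ u in Ioi 0, Real.exp (-l * u) * (u + x) ^ s ≤ x ^ s / l := by
  have hbound : ∫ u in Ioi 0, Real.exp (-l * u) * (u + x) ^ s ≤
      ∫ u in Ioi 0, Real.exp (-l * u) * x ^ s := by
    refine integral_mono_of_nonneg ?_ ((exp_neg_integrableOn_Ioi 0 hl).mul_const _) ?_
    · filter_upwards [ae_restrict_mem measurableSet_Ioi] with u hu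
      exact mul_nonneg (Real.exp_nonneg _) (rpow_nonneg (by linarith [mem_Ioi.mp hu]) s)
    · filter_upwards [ae_restrict_mem measurableSet_Ioi] with u hu
      exact mul_le_mul_of_nonneg_left
        (rpow_le_rpow_of_nonpos hx (le_add_of_nonneg_left (le_of_lt hu)) hs) (Real.exp_nonneg _)
  rwa [integral_mul_const, integral_exp_neg_mul_Ioi_zero hl, one_div_mul_eq_div] at hbound

lemma integrableOn_exp_neg_mul_mul_rpow {l s : ℝ} (hl : 0 < l) (hs : -1 < s) :
    IntegrableOn (fun t => Real.exp (-l * t) * t ^ s) (Ioi 0) := by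
  simpa only [rpow_one, mul_comm] using integrableOn_rpow_mul_exp_neg_mul_rpow hs one_pos hl

lemma integral_exp_neg_mul_mul_rpow_Ioi_zero {l s : ℝ} (hl : 0 < l) (hs : -1 < s) :
    ∫ t in Ioi 0, Real.exp (-l * t) * t ^ s = (1 / l) ^ (s + 1) * Real.Gamma (s + 1) := by
  rw [← integral_rpow_mul_exp_neg_mul_Ioi (by linarith) hl, add_sub_cancel_right]
  simp only [neg_mul, mul_comm (Real.exp _)]

lemma integral_exp_neg_mul_mul_add_rpow_le_of_nonneg {l s x : ℝ} (hl : 0 < l) (hx : 0 ≤ x)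
    (hs : 0 ≤ s) : ∫ u in Ioi 0, Real.exp (-l * u) * (u + x) ^ s ≤
      2 ^ s * (x ^ s / l + (1 / l) ^ (s + 1) * Real.Gamma (s + 1)) := by
  have hmajor : IntegrableOn
      (fun u => 2 ^ s * (x ^ s * Real.exp (-l * u) + Real.exp (-l * u) * u ^ s)) (Ioi 0) :=
    (((exp_neg_integrableOn_Ioi 0 hl).const_mul _).add
      (integrableOn_exp_neg_mul_mul_rpow hl (by linarith))).const_mul _
  calc ∫ u in Ioi 0, Real.exp (-l * u) * (u + x) ^ s
      ≤ ∫ u in Ioi 0, 2 ^ s * (x ^ s * Real.exp (-l * u) + Real.exp (-l * u) * u ^ s) := by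
        refine integral_mono_of_nonneg ?_ hmajor ?_
        · filter_upwards [ae_restrict_mem measurableSet_Ioi] with u hu
          exact mul_nonneg (Real.exp_nonneg _) (rpow_nonneg (by linarith [mem_Ioi.mp hu]) s)
        · filter_upwards [ae_restrict_mem measurableSet_Ioi] with u hu
          calc Real.exp (-l * u) * (u + x) ^ s
              ≤ Real.exp (-l * u) * (2 ^ s * (u ^ s + x ^ s)) := mul_le_mul_of_nonneg_left
                (add_rpow_le_two_rpow_mul_rpow_add_rpow hu.le hx hs) (Real.exp_nonneg _)
            _ = 2 ^ s * (x ^ s * Real.exp (-l * u) + Real.exp (-l * u) * u ^ s) := by ring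
    _ = 2 ^ s * (x ^ s / l + (1 / l) ^ (s + 1) * Real.Gamma (s + 1)) := by
        rw [integral_const_mul, integral_add ((exp_neg_integrableOn_Ioi 0 hl).const_mul _)
          (integrableOn_exp_neg_mul_mul_rpow hl (by linarith)), integral_const_mul,
          integral_exp_neg_mul_Ioi_zero hl, integral_exp_neg_mul_mul_rpow_Ioi_zero hl (by linarith),
          mul_one_div]

lemma exists_integral_exp_neg_mul_mul_add_rpow_le {l σ : ℝ} (hl : 0 < l) (hσ : 0 < σ) :
    ∃ C, ∀ x > 0, ∫ u in Ioi 0, Real.exp (-l * u) * (u + x) ^ (σ - 1) ≤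
      C * (x ^ (σ - 1) + x ^ (min σ 1 - 1)) := by
  rcases le_total σ 1 with hσ1 | hσ1
  · refine ⟨1 / l, fun x hx => ?_⟩
    have hxs := rpow_nonneg hx.le (σ - 1)
    calc _ ≤ x ^ (σ - 1) / l :=
          integral_exp_neg_mul_mul_add_rpow_le_of_nonpos hl hx (by linarith)
      _ ≤ 1 / l * (x ^ (σ - 1) + x ^ (min σ 1 - 1)) := by
          rw [min_eq_left hσ1, ← one_div_mul_eq_div]
          gcongr
          linarith
  · refine ⟨2 ^ (σ - 1) * (1 / l + (1 / l) ^ σ * Real.Gamma σ), fun x hx => ?_⟩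
    have hbound := integral_exp_neg_mul_mul_add_rpow_le_of_nonneg hl hx.le (sub_nonneg.2 hσ1)
    rw [sub_add_cancel] at hbound
    rw [min_eq_right hσ1, sub_self, rpow_zero]
    refine hbound.trans ?_
    have hA : 0 ≤ (1 / l) ^ σ * Real.Gamma σ := by positivity
    have hxs : 0 ≤ x ^ (σ - 1) := rpow_nonneg hx.le _
    rw [div_eq_mul_one_div, mul_assoc]
    gcongr
    nlinarith [mul_nonneg hA hxs, one_div_pos.2 hl]

lemma integrableOn_mul_setIntegral_Ioc {a : ℝ} {W H G : ℝ → ℝ} (hW : Measurable W)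
    (hH : AEStronglyMeasurable H (volume.restrict (Ioi a)))
    (hWi : ∀ x > a, IntegrableOn W (Ioi x)) (hG : IntegrableOn G (Ioi a))
    (hle : ∀ x > a, (∫ t in Ioi x, ‖W t‖) * ‖H x‖ ≤ G x) :
    IntegrableOn (fun t => W t * ∫ x in Ioc a t, H x) (Ioi a) := by
  set μ := volume.restrict (Ioi a)
  set S : Set (ℝ × ℝ) := {p | p.2 ∈ Ioc a p.1}
  have hS : MeasurableSet S :=
    (measurableSet_lt measurable_const measurable_snd).inter
      (measurableSet_le measurable_snd measurable_fst)
  set F : ℝ × ℝ → ℝ := S.indicator fun p => W p.1 * H p.2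
  have hFm : AEStronglyMeasurable F (μ.prod μ) :=
    ((hW.aestronglyMeasurable.comp_fst).mul hH.comp_snd).indicator hS
  have hF_slice_snd (t : ℝ) : (fun x => F (t, x)) = (Ioc a t).indicator fun x => W t * H x := by
    ext x; simp only [F, S, indicator, mem_ofPred_eq]
  have hF_slice_fst {x : ℝ} (hx : a < x) :
      (fun t => F (t, x)) = (Ici x).indicator fun t => W t * H x := by
    ext t
    simp [F, S, indicator, hx]
  have hF : Integrable F (μ.prod μ) := by
    refine (integrable_prod_iff' hFm).2 ⟨?_, ?_⟩
    · filter_upwards [ae_restrict_mem measurableSet_Ioi] with x hx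
      rw [hF_slice_fst hx]
      have hWx : IntegrableOn W (Ici x) := (integrableOn_Ici_iff_integrableOn_Ioi).2 (hWi x hx)
      exact (IntegrableOn.integrable_indicator (hWx.mul_const (H x)) measurableSet_Ici).restrict
    · refine hG.mono' hFm.norm.prod_swap.integral_prod_right' ?_
      filter_upwards [ae_restrict_mem measurableSet_Ioi] with x hx
      have hIci : Ici x ∩ Ioi a = Ici x := inter_eq_left.2 (Ici_subset_Ioi.2 hx)
      rw [Real.norm_of_nonneg (integral_nonneg fun _ => norm_nonneg _)]
      calc ∫ t, ‖F (t, x)‖ ∂μ = ∫ t, (Ici x).indicator (fun t => ‖W t‖ * ‖H x‖) t ∂μ := by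
            congr 1 with t
            simp only [congrFun (hF_slice_fst hx) t, norm_indicator_eq_indicator_norm, norm_mul]
        _ = (∫ t in Ioi x, ‖W t‖) * ‖H x‖ := by
            rw [integral_indicator measurableSet_Ici, Measure.restrict_restrict measurableSet_Ici,
              hIci, integral_Ici_eq_integral_Ioi, integral_mul_const]
        _ ≤ G x := hle x hx
  refine hF.integral_prod_left.congr (.of_forall fun t => ?_)
  simp only [μ, hF_slice_snd, integral_indicator measurableSet_Ioc,
    Measure.restrict_restrict measurableSet_Ioc, inter_eq_left.2 Ioc_subset_Ioi_self,
    integral_const_mul]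

lemma aestronglyMeasurable_of_integrableOn_mul_rpow {g : ℝ → ℝ} {s : ℝ}
    (h : IntegrableOn (fun x => g x * x ^ s) (Ioi 0)) :
    AEStronglyMeasurable g (volume.restrict (Ioi 0)) := by
  refine (h.aestronglyMeasurable.mul (measurable_id.pow_const (-s)).aestronglyMeasurable).congr ?_
  filter_upwards [ae_restrict_mem measurableSet_Ioi] with x hx
  simp [mul_assoc, ← rpow_add hx]

theorem stmt2_general (b : ℝ) (α : ℝ)
    (f : ℂ → ℂ)
    (hint : ∀ σ ∈ Set.Ioo (0 : ℝ) b, ∀ θ : ℝ, α - π / 2 < θ → θ < π / 2 - α →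
      IntegrableOn
        (fun x : ℝ => ‖f (Complex.exp (θ * Complex.I) * x)‖ * x ^ (σ - 1))
        (Set.Ioi (0 : ℝ))) :
    ∀ l : ℝ, 0 < l → ∀ σ ∈ Set.Ioo (0 : ℝ) b, ∀ θ : ℝ, α - π / 2 < θ → θ < π / 2 - α →
      IntegrableOn
        (fun t : ℝ => Real.exp (-l * t) * t ^ (σ - 1) *
          ∫ x in Set.Ioc (0 : ℝ) t, Real.exp (l * x) *
            ‖f (Complex.exp (θ * Complex.I) * x)‖)
        (Set.Ioi (0 : ℝ)) := by
  rintro l hl σ ⟨hσ0, hσb⟩ θ hθ₁ hθ₂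
  set g : ℝ → ℝ := fun x => ‖f (Complex.exp (θ * Complex.I) * x)‖
  have hgσ : IntegrableOn (fun x => g x * x ^ (σ - 1)) (Ioi 0) := hint σ ⟨hσ0, hσb⟩ θ hθ₁ hθ₂
  have hgσ' : IntegrableOn (fun x => g x * x ^ (min σ 1 - 1)) (Ioi 0) :=
    hint _ ⟨lt_min hσ0 one_pos, (min_le_left σ 1).trans_lt hσb⟩ θ hθ₁ hθ₂
  obtain ⟨C, hC⟩ := exists_integral_exp_neg_mul_mul_add_rpow_le hl hσ0
  refine integrableOn_mul_setIntegral_Ioc (by fun_prop)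
    ((by fun_prop : Measurable fun x => Real.exp (l * x)).aestronglyMeasurable.mul
      (aestronglyMeasurable_of_integrableOn_mul_rpow hgσ))
    (fun x hx => (integrableOn_exp_neg_mul_mul_rpow hl (by linarith)).mono_set
      (Ioi_subset_Ioi hx.le))
    ((hgσ.add hgσ').const_mul C) fun x hx => ?_
  calc (∫ t in Ioi x, ‖Real.exp (-l * t) * t ^ (σ - 1)‖) * ‖Real.exp (l * x) * g x‖
      = (∫ t in Ioi x, ‖Real.exp (-l * t) * t ^ (σ - 1)‖) * Real.exp (l * x) * g x := by
        rw [norm_mul, norm_norm, Real.norm_of_nonneg (Real.exp_nonneg _), mul_assoc]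
    _ = (∫ u in Ioi 0, Real.exp (-l * u) * (u + x) ^ (σ - 1)) * g x := by
        rw [integral_Ioi_norm_exp_neg_mul_mul_rpow_mul_exp hx.le]
    _ ≤ C * (x ^ (σ - 1) + x ^ (min σ 1 - 1)) * g x :=
        mul_le_mul_of_nonneg_right (hC x hx) (norm_nonneg _)
    _ = C * (g x * x ^ (σ - 1) + g x * x ^ (min σ 1 - 1)) := by ring

/-- Lemma 2 of the paper. If `f` is holomorphic on the sector `S_α` and all
its weighted Mellin integrals converge absolutely, then for every `λ > 0`, `σ ∈ (0,b)` and
admissible `θ`, the iterated integral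
`∫_0^∞ e^{-λt} t^{σ-1} (∫_0^t e^{λx} |f(e^{iθ}x)| dx) dt` is finite. -/
theorem stmt2 (b : ℝ) (hb : 0 < b) (α : ℝ) (hα0 : 0 ≤ α) (hα : α < π / 2)
    (f : ℂ → ℂ)
    (hf : DifferentiableOn ℂ f {w : ℂ | w ≠ 0 ∧ α - π / 2 < w.arg ∧ w.arg < π / 2 - α})
    (hint : ∀ σ ∈ Set.Ioo (0 : ℝ) b, ∀ θ : ℝ, α - π / 2 < θ → θ < π / 2 - α →
      IntegrableOn
        (fun x : ℝ => ‖f (Complex.exp (θ * Complex.I) * x)‖ * x ^ (σ - 1))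
        (Set.Ioi (0 : ℝ))) :
    ∀ l : ℝ, 0 < l → ∀ σ ∈ Set.Ioo (0 : ℝ) b, ∀ θ : ℝ, α - π / 2 < θ → θ < π / 2 - α →
      IntegrableOn
        (fun t : ℝ => Real.exp (-l * t) * t ^ (σ - 1) *
          ∫ x in Set.Ioc (0 : ℝ) t, Real.exp (l * x) *
            ‖f (Complex.exp (θ * Complex.I) * x)‖)
        (Set.Ioi (0 : ℝ)) :=
  stmt2_general b α f hint
end

section
/- Let b > 1, let 0 ≤ α < π/2 and C > 0, and let φ be holomorphic on the vertical strip {z ∈ ℂ : 0 < Re z < b} with |φ(z)| ≤ C·exp(α·|Im z|) there. Fix σ ∈ (1, b) and define f(x) = (1/(2π)) ∫_{t ∈ ℝ} Γ(σ + i t)·φ(σ + i t)·x^{−(σ + i t)} dt for x > 0. Then f is differentiable on (0, ∞) and for every x > 0 one has (1/(2π)) ∫_{t ∈ ℝ} Γ(σ + i t)·( φ(σ + i t) − φ(σ − 1 + i t) )·x^{−(σ + i t)} dt = f(x) + f′(x), the left-hand integral converging absolutely. -/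
/-!
Write `f = M⁻¹_σ[Γφ]` for the inverse Mellin transform along `Re s = σ`. Differentiating under
the integral sign, `d/dx x^(-s) = -s x^(-s-1)` and `s Γ(s) = Γ(s+1)` give
`f' = -M⁻¹_{σ+1}[Γ(s) φ(s-1)]`. For any `θ ∈ (α, π/2)` Euler's integral, rotated onto the ray
`arg u = θ`, gives `|Γ(σ+it)| ≤ Γ(σ) cos(θ)^(-σ) e^(-θ|t|)`, so `Γ(s) φ(s-1)` decays like
`e^(-(θ-α)|Im s|)` on the closed strip `σ ≤ Re s ≤ σ+1`, where it is holomorphic. Cauchy's theorem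
on rectangles moves the line of integration from `σ+1` back to `σ`, and then
`M⁻¹_σ[Γ(φ - φ(·-1))] = f + f'`.
-/

open Complex MeasureTheory Real Set Filter Topology

lemma integrable_exp_neg_mul_abs {δ : ℝ} (hδ : 0 < δ) :
    Integrable fun t : ℝ => rexp (-δ * |t|) := by
  rw [← integrableOn_univ, ← Iic_union_Ioi (a := (0 : ℝ))]
  refine IntegrableOn.union ?_ ?_
  · refine (integrableOn_exp_mul_Iic hδ 0).congr_fun (fun t ht => ?_) measurableSet_Iic
    rw [abs_of_nonpos ht, mul_neg, neg_mul, neg_neg]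
  · refine (integrableOn_exp_mul_Ioi (neg_lt_zero.2 hδ) 0).congr_fun (fun t ht => ?_)
      measurableSet_Ioi
    rw [abs_of_pos ht]

section GammaIntegral

variable {s : ℂ}

lemma integrableOn_rpow_mul_exp_neg_mul {a r : ℝ} (ha : -1 < a) (hr : 0 < r) :
    IntegrableOn (fun u : ℝ => u ^ a * rexp (-(r * u))) (Ioi 0) := by
  simpa [Real.rpow_one] using integrableOn_rpow_mul_exp_neg_mul_rpow ha zero_lt_one hr

lemma norm_cpow_mul_exp_neg_mul {u : ℝ} (hu : 0 < u) (s c : ℂ) :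
    ‖(u : ℂ) ^ (s - 1) * cexp (-(c * u))‖ = u ^ (s.re - 1) * rexp (-(c.re * u)) := by
  simp [norm_cpow_eq_rpow_re_of_pos hu, Complex.norm_exp]

lemma continuousOn_cpow_mul_exp_neg_mul (s c : ℂ) :
    ContinuousOn (fun u : ℝ => (u : ℂ) ^ (s - 1) * cexp (-(c * u))) (Ioi 0) :=
  fun u hu => ((continuousAt_ofReal_cpow_const u (s - 1) (Or.inr hu.ne')).mul
    (by fun_prop)).continuousWithinAt

lemma integrableOn_cpow_mul_exp_neg_mul (hs : 0 < s.re) {c : ℂ} (hc : 0 < c.re) :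
    IntegrableOn (fun u : ℝ => (u : ℂ) ^ (s - 1) * cexp (-(c * u))) (Ioi 0) := by
  refine Integrable.mono' (integrableOn_rpow_mul_exp_neg_mul (a := s.re - 1) (by linarith) hc)
    ((continuousOn_cpow_mul_exp_neg_mul s c).aestronglyMeasurable measurableSet_Ioi) ?_
  filter_upwards [ae_restrict_mem measurableSet_Ioi] with u hu
  rw [norm_cpow_mul_exp_neg_mul hu]

lemma differentiableOn_integral_cpow_mul_exp_neg_mul (hs : 0 < s.re) :
    DifferentiableOn ℂ (fun c : ℂ => ∫ u : ℝ in Ioi 0, (u : ℂ) ^ (s - 1) * cexp (-(c * u)))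
      {c | 0 < c.re} := by
  intro c₀ (hc₀ : 0 < c₀.re)
  refine (hasDerivAt_integral_of_dominated_loc_of_deriv_le
    (F' := fun c (u : ℝ) => (u : ℂ) ^ (s - 1) * (cexp (-(c * u)) * -(u : ℂ)))
    (bound := fun u : ℝ => u ^ s.re * rexp (-(c₀.re / 2 * u)))
    (Metric.ball_mem_nhds c₀ (half_pos hc₀))
    (.of_forall fun c => (continuousOn_cpow_mul_exp_neg_mul s c).aestronglyMeasurable
      measurableSet_Ioi)
    (integrableOn_cpow_mul_exp_neg_mul hs hc₀) ?_ ?_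
    (integrableOn_rpow_mul_exp_neg_mul (by linarith) (half_pos hc₀)) ?_).2.differentiableAt
    |>.differentiableWithinAt
  · exact ContinuousOn.aestronglyMeasurable (fun u hu =>
      ((continuousAt_ofReal_cpow_const u (s - 1) (Or.inr hu.ne')).mul
        (by fun_prop)).continuousWithinAt) measurableSet_Ioi
  · filter_upwards [ae_restrict_mem measurableSet_Ioi] with u (hu : 0 < u) c hc
    have hre : c₀.re / 2 ≤ c.re := by
      have := (abs_le.1 ((abs_re_le_norm (c - c₀)).trans (mem_ball_iff_norm.1 hc).le)).1
      rw [sub_re] at this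
      linarith
    rw [← mul_assoc, norm_mul, norm_cpow_mul_exp_neg_mul hu, norm_neg, norm_real,
      Real.norm_of_nonneg hu.le, mul_right_comm, ← Real.rpow_add_one hu.ne', sub_add_cancel]
    gcongr
  · filter_upwards with u c _
    exact (((hasDerivAt_mul_const (u : ℂ)).neg).cexp).const_mul _

/-- `Complex.integral_cpow_mul_exp_neg_mul_Ioi` for complex rates, by analytic continuation in `c`
from the positive reals. -/
lemma integral_cpow_mul_exp_neg_mul_Ioi_of_re_pos (hs : 0 < s.re) {c : ℂ} (hc : 0 < c.re) :
    ∫ u : ℝ in Ioi 0, (u : ℂ) ^ (s - 1) * cexp (-(c * u)) = c ^ (-s) * Complex.Gamma s := by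
  have hU : IsOpen {c : ℂ | 0 < c.re} := isOpen_lt continuous_const continuous_re
  have hpow : DifferentiableOn ℂ (fun c : ℂ => c ^ (-s) * Complex.Gamma s) {c | 0 < c.re} :=
    fun c hc => ((differentiableAt_id.cpow_const (mem_slitPlane_iff.2 (Or.inl hc))).mul_const
      _).differentiableWithinAt
  refine ((differentiableOn_integral_cpow_mul_exp_neg_mul hs).analyticOnNhd hU
    ).eqOn_of_preconnected_of_frequently_eq (hpow.analyticOnNhd hU)
    (convex_halfSpace_re_gt 0).isPreconnected (z₀ := 1) (by simp) ?_ hc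
  have hreal : Tendsto ((↑) : ℝ → ℂ) (𝓝[≠] 1) (𝓝[≠] 1) := by
    rw [tendsto_nhdsWithin_iff]; constructor
    · exact tendsto_nhdsWithin_of_tendsto_nhds continuous_ofReal.continuousAt
    · exact eventually_nhdsWithin_iff.mpr (Eventually.of_forall fun t ht => ofReal_ne_one.mpr ht)
  refine hreal.frequently (((eventually_gt_nhds zero_lt_one).filter_mono nhdsWithin_le_nhds).mono
    fun r (hr : 0 < r) => ?_).frequently
  rw [integral_cpow_mul_exp_neg_mul_Ioi hs hr, one_div,
    inv_cpow _ _ (by simp [arg_ofReal_of_nonneg hr.le, Real.pi_ne_zero.symm]), ← cpow_neg]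

end GammaIntegral

section GammaDecay

variable {σ θ : ℝ}

/-- Euler's integral rotated onto the ray `arg u = θ`: with `c = exp(iθ)` one has
`Γ(s) = c^s ∫₀^∞ u^(s-1) e^(-cu) du`, and `|c^s| = e^(-θt)`. -/
lemma norm_Gamma_le_of_rotation (hσ : 0 < σ) (hθ : θ ∈ Ioo (-(π / 2)) (π / 2)) (t : ℝ) :
    ‖Complex.Gamma (σ + t * I)‖ ≤ Real.Gamma σ * Real.cos θ ^ (-σ) * rexp (-(θ * t)) := by
  have hcos : 0 < Real.cos θ := Real.cos_pos_of_mem_Ioo hθ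
  have hc : (cexp (θ * I)).re = Real.cos θ := exp_ofReal_mul_I_re θ
  have hrot : ‖cexp (θ * I) ^ (-(σ + t * I : ℂ))‖ = rexp (θ * t) := by
    rw [cpow_def_of_ne_zero (Complex.exp_ne_zero _), log_exp
      (by rw [mul_I_im, ofReal_re]; linarith [hθ.1, pi_pos])
      (by rw [mul_I_im, ofReal_re]; linarith [hθ.2, pi_pos]), Complex.norm_exp]
    simp
  have hint : ‖∫ u : ℝ in Ioi 0, (u : ℂ) ^ ((σ + t * I : ℂ) - 1) * cexp (-(cexp (θ * I) * u))‖
      ≤ Real.cos θ ^ (-σ) * Real.Gamma σ := by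
    calc _ ≤ ∫ u : ℝ in Ioi 0, u ^ (σ - 1) * rexp (-(Real.cos θ * u)) := by
          refine norm_integral_le_of_norm_le
            (integrableOn_rpow_mul_exp_neg_mul (by linarith) hcos) ?_
          filter_upwards [ae_restrict_mem measurableSet_Ioi] with u hu
          rw [norm_cpow_mul_exp_neg_mul hu, hc]
          simp
      _ = _ := by
          rw [integral_rpow_mul_exp_neg_mul_Ioi hσ hcos, one_div, Real.inv_rpow hcos.le,
            ← Real.rpow_neg hcos.le]
  rw [integral_cpow_mul_exp_neg_mul_Ioi_of_re_pos (by simpa) (hc ▸ hcos), norm_mul, hrot] at hint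
  rw [Real.exp_neg, ← div_eq_mul_inv, le_div_iff₀ (exp_pos _)]
  linarith

lemma norm_Gamma_le (hσ : 0 < σ) (hθ : θ ∈ Ioo (-(π / 2)) (π / 2)) (t : ℝ) :
    ‖Complex.Gamma (σ + t * I)‖ ≤ Real.Gamma σ * Real.cos θ ^ (-σ) * rexp (-θ * |t|) := by
  rcases le_total 0 t with ht | ht
  · simpa [abs_of_nonneg ht] using norm_Gamma_le_of_rotation hσ hθ t
  · simpa [abs_of_nonpos ht] using
      norm_Gamma_le_of_rotation hσ (θ := -θ) ⟨by linarith [hθ.2], by linarith [hθ.1]⟩ t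

lemma exists_norm_Gamma_le_on_strip {a₁ a₂ : ℝ} (ha : 0 < a₁) (hθ : θ ∈ Ioo (-(π / 2)) (π / 2)) :
    ∃ K, ∀ s : ℂ, s.re ∈ Icc a₁ a₂ → ‖Complex.Gamma s‖ ≤ K * rexp (-θ * |s.im|) := by
  have hcos : 0 < Real.cos θ := Real.cos_pos_of_mem_Ioo hθ
  have hcont : ContinuousOn (fun u => Real.Gamma u * Real.cos θ ^ (-u)) (Icc a₁ a₂) := by
    refine ContinuousOn.mul (fun u hu => ?_)
      (continuous_const.rpow continuous_neg fun _ => Or.inl hcos.ne').continuousOn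
    refine (Real.differentiableAt_Gamma fun m => ?_).continuousAt.continuousWithinAt
    exact ((neg_nonpos.2 m.cast_nonneg).trans_lt (ha.trans_le hu.1)).ne'
  obtain ⟨K, hK⟩ := isCompact_Icc.exists_bound_of_continuousOn hcont
  refine ⟨K, fun s hs => ?_⟩
  have h := norm_Gamma_le (ha.trans_le hs.1) hθ s.im
  rw [re_add_im] at h
  exact h.trans (mul_le_mul_of_nonneg_right ((le_abs_self _).trans (hK _ hs)) (exp_nonneg _))

end GammaDecay

section Strip

variable {E : Type*} [NormedAddCommGroup E]

def ExpDecayOnStrip (g : ℂ → E) (a₁ a₂ : ℝ) : Prop :=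
  ∃ K δ : ℝ, 0 < δ ∧ ∀ s : ℂ, s.re ∈ Icc a₁ a₂ → ‖g s‖ ≤ K * rexp (-δ * |s.im|)

variable {g : ℂ → E} {a₁ a₂ : ℝ}

lemma ExpDecayOnStrip.verticalIntegrable (h : ExpDecayOnStrip g a₁ a₂)
    (hg : ContinuousOn g (re ⁻¹' Icc a₁ a₂)) {a : ℝ} (ha : a ∈ Icc a₁ a₂) :
    VerticalIntegrable g a := by
  obtain ⟨K, δ, hδ, hK⟩ := h
  refine Integrable.mono' ((integrable_exp_neg_mul_abs hδ).const_mul K) ?_ (.of_forall fun t => ?_)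
  · exact (hg.comp_continuous (by fun_prop) fun t => by simpa using ha).aestronglyMeasurable
  · simpa using hK (a + t * I) (by simpa using ha)

variable [NormedSpace ℂ E]

lemma ExpDecayOnStrip.cpow_smul (h : ExpDecayOnStrip g a₁ a₂) {x : ℝ} (hx : 0 < x) :
    ExpDecayOnStrip (fun s => (x : ℂ) ^ (-s) • g s) a₁ a₂ := by
  obtain ⟨K, δ, hδ, hK⟩ := h
  refine ⟨max (x ^ (-a₁)) (x ^ (-a₂)) * K, δ, hδ, fun s hs => ?_⟩
  have hpow : x ^ (-s.re) ≤ max (x ^ (-a₁)) (x ^ (-a₂)) := by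
    rcases le_total x 1 with hx1 | hx1
    · exact le_max_of_le_right (rpow_le_rpow_of_exponent_ge hx hx1 (neg_le_neg hs.2))
    · exact le_max_of_le_left (rpow_le_rpow_of_exponent_le hx1 (neg_le_neg hs.1))
  rw [norm_smul, norm_cpow_eq_rpow_re_of_pos hx, neg_re, mul_assoc]
  exact mul_le_mul hpow (hK s hs) (norm_nonneg _) ((rpow_pos_of_pos hx _).le.trans hpow)

lemma Complex.VerticalIntegrable.cpow_smul {F : ℂ → E} {σ : ℝ} (hF : VerticalIntegrable F σ)
    {x : ℝ} (hx : 0 < x) :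
    VerticalIntegrable (fun s => (x : ℂ) ^ (-s) • F s) σ := by
  refine Integrable.mono' (hF.norm.const_mul (x ^ (-σ)))
    (((continuous_const.add (by fun_prop)).neg.const_cpow
      (Or.inl (ofReal_ne_zero.2 hx.ne'))).aestronglyMeasurable.smul hF.aestronglyMeasurable)
    (.of_forall fun t => ?_)
  simp [norm_smul, norm_cpow_eq_rpow_re_of_pos hx]

lemma expDecayOnStrip_Gamma_mul {ψ : ℂ → ℂ} {α C : ℝ} (ha : 0 < a₁) (hα : α < π / 2)
    (hψ : ∀ s : ℂ, s.re ∈ Icc a₁ a₂ → ‖ψ s‖ ≤ C * rexp (α * |s.im|)) :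
    ExpDecayOnStrip (fun s => Complex.Gamma s * ψ s) a₁ a₂ := by
  obtain ⟨θ, hmax, hθ⟩ := exists_between (max_lt hα (half_pos pi_pos))
  have hθα : α < θ := (le_max_left α 0).trans_lt hmax
  replace hθ : θ ∈ Ioo (-(π / 2)) (π / 2) :=
    ⟨by linarith [le_max_right α 0, pi_pos], hθ⟩
  obtain ⟨K, hK⟩ := exists_norm_Gamma_le_on_strip (a₂ := a₂) ha hθ
  refine ⟨K * C, θ - α, by linarith, fun s hs => ?_⟩
  have hexp : rexp (-θ * |s.im|) * rexp (α * |s.im|) = rexp (-(θ - α) * |s.im|) := by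
    rw [← Real.exp_add]; ring_nf
  calc ‖Complex.Gamma s * ψ s‖ = ‖Complex.Gamma s‖ * ‖ψ s‖ := norm_mul _ _
    _ ≤ K * rexp (-θ * |s.im|) * (C * rexp (α * |s.im|)) :=
        mul_le_mul (hK s hs) (hψ s hs) (norm_nonneg _) ((norm_nonneg _).trans (hK s hs))
    _ = K * C * rexp (-(θ - α) * |s.im|) := by rw [← hexp]; ring

end Strip

section VerticalShift

variable {E : Type*} [NormedAddCommGroup E] [NormedSpace ℂ E] {g : ℂ → E} {a₁ a₂ : ℝ}

lemma norm_sub_intervalIntegral_vertical_le {K δ : ℝ} (ha : a₁ ≤ a₂)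
    (hg : DifferentiableOn ℂ g (re ⁻¹' Icc a₁ a₂))
    (hK : ∀ s : ℂ, s.re ∈ Icc a₁ a₂ → ‖g s‖ ≤ K * rexp (-δ * |s.im|)) {T : ℝ} (hT : 0 ≤ T) :
    ‖(∫ y in -T..T, g (a₂ + y * I)) - ∫ y in -T..T, g (a₁ + y * I)‖
      ≤ 2 * (K * rexp (-δ * T) * (a₂ - a₁)) := by
  have hrect := integral_boundary_rect_eq_zero_of_differentiableOn g (a₁ - T * I) (a₂ + T * I)
    (hg.mono fun s hs => by simpa [mem_reProdIm, uIcc_of_le ha] using hs.1)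
  simp only [sub_re, add_re, sub_im, add_im, ofReal_re, ofReal_im, mul_re, mul_im, I_re, I_im,
    mul_zero, mul_one, sub_zero, zero_sub, add_zero, zero_add] at hrect
  have hedge : ∀ y : ℝ, |y| = T →
      ‖∫ x in a₁..a₂, g (x + y * I)‖ ≤ K * rexp (-δ * T) * (a₂ - a₁) := by
    intro y hy
    rw [← abs_of_nonneg (sub_nonneg.2 ha)]
    refine intervalIntegral.norm_integral_le_of_norm_le_const fun x hx => ?_
    rw [uIoc_of_le ha] at hx
    simpa [hy] using hK (x + y * I) (by simpa using Ioc_subset_Icc_self hx)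
  calc _ = ‖I • ((∫ y in -T..T, g (a₂ + y * I)) - ∫ y in -T..T, g (a₁ + y * I))‖ := by
        rw [norm_smul, norm_I, one_mul]
    _ = ‖(∫ x in a₁..a₂, g (x + T * I)) - ∫ x in a₁..a₂, g (x + ↑(-T) * I)‖ := by
        rw [smul_sub]
        congr 1
        linear_combination (norm := module) hrect
    _ ≤ _ := by
        refine (norm_sub_le _ _).trans ?_
        linarith [hedge T (abs_of_nonneg hT), hedge (-T) (by rw [abs_neg, abs_of_nonneg hT])]

theorem integral_vertical_eq_of_expDecayOnStrip (ha : a₁ ≤ a₂)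
    (hg : DifferentiableOn ℂ g (re ⁻¹' Icc a₁ a₂)) (hdec : ExpDecayOnStrip g a₁ a₂) :
    ∫ t : ℝ, g (a₁ + t * I) = ∫ t : ℝ, g (a₂ + t * I) := by
  obtain ⟨K, δ, hδ, hK⟩ := id hdec
  have hlim : ∀ a ∈ Icc a₁ a₂, Tendsto (fun T : ℝ => ∫ y in -T..T, g (a + y * I)) atTop
      (𝓝 (∫ t : ℝ, g (a + t * I))) := fun a ha =>
    intervalIntegral_tendsto_integral (hdec.verticalIntegrable hg.continuousOn ha)
      tendsto_neg_atTop_atBot tendsto_id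
  have hbound : Tendsto (fun T : ℝ => 2 * (K * rexp (-δ * T) * (a₂ - a₁))) atTop (𝓝 0) := by
    simpa using (((tendsto_exp_neg_atTop_nhds_zero.comp
      (tendsto_id.const_mul_atTop hδ)).const_mul K).mul_const (a₂ - a₁)).const_mul 2
  refine (sub_eq_zero.1 (tendsto_nhds_unique ((hlim a₂ ⟨ha, le_rfl⟩).sub (hlim a₁ ⟨le_rfl, ha⟩))
    (squeeze_zero_norm' ?_ hbound))).symm
  filter_upwards [eventually_ge_atTop 0] with T hT
  exact norm_sub_intervalIntegral_vertical_le ha hg hK hT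

end VerticalShift

section MellinInverse

variable {E : Type*} [NormedAddCommGroup E] [NormedSpace ℂ E]

lemma hasDerivAt_ofReal_cpow_neg_smul {y : ℝ} (hy : 0 < y) (s : ℂ) (v : E) :
    HasDerivAt (fun y : ℝ => (y : ℂ) ^ (-s) • v) (-((y : ℂ) ^ (-(s + 1)) • s • v)) y := by
  have h := ((hasDerivAt_id (y : ℂ)).cpow_const (c := -s)
    (ofReal_mem_slitPlane.2 hy)).comp_ofReal.smul_const v
  simp only [id, mul_one] at h
  convert h using 1
  rw [smul_smul, ← neg_smul, neg_add', mul_comm, neg_mul]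

/-- If `F` is the Mellin transform of `f`, then `G` with `G(s+1) = s F(s)` is that of `-f'`. -/
theorem hasDerivAt_mellinInv {F G : ℂ → E} {σ : ℝ} (hF : VerticalIntegrable F σ)
    (hG : VerticalIntegrable G (σ + 1)) (hFG : ∀ s : ℂ, s.re = σ → G (s + 1) = s • F s)
    {x : ℝ} (hx : 0 < x) :
    HasDerivAt (mellinInv σ F) (-mellinInv (σ + 1) G x) x := by
  set M := max ((x / 2) ^ (-(σ + 1))) ((2 * x) ^ (-(σ + 1)))
  have hball : ∀ y ∈ Metric.ball x (x / 2), 0 < y ∧ y ^ (-(σ + 1)) ≤ M := fun y hy => by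
    obtain ⟨h₁, h₂⟩ := abs_lt.1 (Real.dist_eq y x ▸ Metric.mem_ball.1 hy)
    refine ⟨by linarith, ?_⟩
    rcases le_total 0 (-(σ + 1)) with hp | hp
    · exact le_max_of_le_right (rpow_le_rpow (by linarith) (by linarith) hp)
    · exact le_max_of_le_left (rpow_le_rpow_of_nonpos (by linarith) (by linarith) hp)
  have hline : ∀ t : ℝ, ((σ + 1 : ℝ) : ℂ) + t * I = (σ + t * I) + 1 := fun t => by
    push_cast; ring
  have key := hasDerivAt_integral_of_dominated_loc_of_deriv_le (μ := volume)
    (F := fun (y t : ℝ) => (y : ℂ) ^ (-(σ + t * I)) • F (σ + t * I))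
    (F' := fun (y t : ℝ) => -((y : ℂ) ^ (-((σ + 1 : ℝ) + t * I)) • G ((σ + 1 : ℝ) + t * I)))
    (bound := fun t : ℝ => M * ‖G ((σ + 1 : ℝ) + t * I)‖)
    (Metric.ball_mem_nhds x (half_pos hx))
    ((eventually_gt_nhds hx).mono fun y hy => (hF.cpow_smul hy).aestronglyMeasurable)
    (hF.cpow_smul hx) (hG.cpow_smul hx).neg.aestronglyMeasurable ?_ (hG.norm.const_mul _) ?_
  · unfold mellinInv
    rw [← smul_neg, ← integral_neg]
    exact key.2.const_smul (1 / (2 * π) : ℝ)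
  · filter_upwards with t y hy
    rw [norm_neg, norm_smul, norm_cpow_eq_rpow_re_of_pos (hball y hy).1]
    gcongr
    simpa using (hball y hy).2
  · filter_upwards with t y hy
    rw [hline, hFG _ (by simp)]
    exact hasDerivAt_ofReal_cpow_neg_smul (hball y hy).1 _ _

theorem mellinInv_eq_of_expDecayOnStrip {F : ℂ → E} (ha : a₁ ≤ a₂)
    (hF : DifferentiableOn ℂ F (re ⁻¹' Icc a₁ a₂)) (hdec : ExpDecayOnStrip F a₁ a₂) {x : ℝ}
    (hx : 0 < x) : mellinInv a₁ F x = mellinInv a₂ F x := by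
  unfold mellinInv
  congr 1
  exact integral_vertical_eq_of_expDecayOnStrip ha
    ((differentiableOn_id.neg.const_cpow (Or.inl (ofReal_ne_zero.2 hx.ne'))).smul hF)
    (hdec.cpow_smul hx)

lemma mellinInv_eq_complex_smul_integral (σ : ℝ) (F : ℂ → E) (x : ℝ) :
    mellinInv σ F x = (1 / (2 * π : ℂ)) • ∫ t : ℝ, (x : ℂ) ^ (-(σ + t * I)) • F (σ + t * I) := by
  rw [mellinInv, RCLike.real_smul_eq_coe_smul (K := ℂ)]
  norm_num

end MellinInverse

section ShiftedStrip

variable {φ : ℂ → ℂ} {b c a₁ a₂ : ℝ}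

lemma differentiableOn_Gamma_mul_comp_sub
    (hφ : DifferentiableOn ℂ φ {z : ℂ | 0 < z.re ∧ z.re < b}) (hc : 0 ≤ c) (h₁ : c < a₁)
    (h₂ : a₂ < b + c) :
    DifferentiableOn ℂ (fun s => Complex.Gamma s * φ (s - c)) (re ⁻¹' Icc a₁ a₂) := by
  refine DifferentiableOn.mul (fun s hs => ?_) (hφ.comp (differentiableOn_id.sub_const _)
    fun s hs => ⟨?_, ?_⟩)
  · refine (differentiableAt_Gamma s fun m hm => ?_).differentiableWithinAt
    have := hs.1
    rw [hm, neg_re, natCast_re] at this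
    linarith [m.cast_nonneg (α := ℝ)]
  all_goals simp only [sub_re, ofReal_re]; linarith [hs.1, hs.2]

lemma expDecayOnStrip_Gamma_mul_comp_sub {α C : ℝ} (hα : α < π / 2)
    (hbound : ∀ z : ℂ, 0 < z.re → z.re < b → ‖φ z‖ ≤ C * rexp (α * |z.im|))
    (hc : 0 ≤ c) (h₁ : c < a₁) (h₂ : a₂ < b + c) :
    ExpDecayOnStrip (fun s => Complex.Gamma s * φ (s - c)) a₁ a₂ := by
  refine expDecayOnStrip_Gamma_mul (C := C) (by linarith) hα fun s hs => ?_
  simpa only [sub_im, ofReal_im, sub_zero] using hbound (s - c)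
    (by rw [sub_re, ofReal_re]; linarith [hs.1]) (by rw [sub_re, ofReal_re]; linarith [hs.2])

end ShiftedStrip

theorem stmt5_general (b : ℝ) (α : ℝ) (hα : α < π / 2)
    (C : ℝ) (φ : ℂ → ℂ)
    (hφ : DifferentiableOn ℂ φ {z : ℂ | 0 < z.re ∧ z.re < b})
    (hbound : ∀ z : ℂ, 0 < z.re → z.re < b →
      ‖φ z‖ ≤ C * Real.exp (α * |z.im|))
    (σ : ℝ) (hσ : σ ∈ Set.Ioo (1 : ℝ) b)
    (f : ℝ → ℂ)
    (hf : ∀ x : ℝ, 0 < x →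
      f x = (1 / (2 * (π : ℂ))) *
        ∫ t : ℝ, Complex.Gamma (σ + t * Complex.I) * φ (σ + t * Complex.I) *
          (x : ℂ) ^ (-((σ : ℂ) + t * Complex.I))) :
    ∃ f' : ℝ → ℂ,
      (∀ x : ℝ, 0 < x → HasDerivAt f (f' x) x) ∧
      (∀ x : ℝ, 0 < x →
        Integrable (fun t : ℝ => Complex.Gamma (σ + t * Complex.I) *
          (φ (σ + t * Complex.I) - φ (σ - 1 + t * Complex.I)) *
          (x : ℂ) ^ (-((σ : ℂ) + t * Complex.I)))) ∧
      (∀ x : ℝ, 0 < x →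
        (1 / (2 * (π : ℂ))) *
          (∫ t : ℝ, Complex.Gamma (σ + t * Complex.I) *
            (φ (σ + t * Complex.I) - φ (σ - 1 + t * Complex.I)) *
            (x : ℂ) ^ (-((σ : ℂ) + t * Complex.I))) = f x + f' x) := by
  obtain ⟨hσ1, hσb⟩ := hσ
  set F₀ : ℂ → ℂ := fun s => Complex.Gamma s * φ s with hF₀
  set F₁ : ℂ → ℂ := fun s => Complex.Gamma s * φ (s - 1) with hF₁
  have hint₀ : VerticalIntegrable F₀ σ := by
    simpa using (expDecayOnStrip_Gamma_mul_comp_sub (c := 0) hα hbound le_rfl (by linarith)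
      (by linarith)).verticalIntegrable
      (differentiableOn_Gamma_mul_comp_sub hφ le_rfl (by linarith) (by linarith)).continuousOn
      ⟨le_rfl, le_rfl⟩
  have hdiff₁ : DifferentiableOn ℂ F₁ (re ⁻¹' Icc σ (σ + 1)) := by
    simpa using differentiableOn_Gamma_mul_comp_sub (c := 1) hφ zero_le_one hσ1 (by linarith)
  have hdec₁ : ExpDecayOnStrip F₁ σ (σ + 1) := by
    simpa using expDecayOnStrip_Gamma_mul_comp_sub (c := 1) hα hbound zero_le_one hσ1
      (by linarith)
  have hint₁ := hdec₁.verticalIntegrable hdiff₁.continuousOn ⟨le_rfl, by linarith⟩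
  have hf' : ∀ x, 0 < x → f x = mellinInv σ F₀ x := fun x hx => by
    rw [hf x hx, mellinInv_eq_complex_smul_integral, smul_eq_mul]
    congr 2 with t
    exact mul_comm _ _
  have hintegrand : ∀ x : ℝ, (fun t : ℝ => Complex.Gamma (σ + t * Complex.I) *
      (φ (σ + t * Complex.I) - φ (σ - 1 + t * Complex.I)) *
      (x : ℂ) ^ (-((σ : ℂ) + t * Complex.I))) = fun t : ℝ =>
        (x : ℂ) ^ (-(σ + t * I)) • F₀ (σ + t * I) - (x : ℂ) ^ (-(σ + t * I)) • F₁ (σ + t * I) :=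
    fun x => funext fun t => by
      simp only [hF₀, hF₁, smul_eq_mul, show (σ : ℂ) - 1 + t * I = σ + t * I - 1 by ring]
      ring
  refine ⟨fun x => -mellinInv (σ + 1) F₁ x, fun x hx => ?_, fun x hx => ?_, fun x hx => ?_⟩
  · refine (hasDerivAt_mellinInv hint₀
      (hdec₁.verticalIntegrable hdiff₁.continuousOn ⟨by linarith, le_rfl⟩) (fun s hs => ?_)
      hx).congr_of_eventuallyEq ((eventually_gt_nhds hx).mono hf')
    have hs0 : s ≠ 0 := fun h => by rw [h, zero_re] at hs; linarith
    simp only [hF₁, hF₀, add_sub_cancel_right, Complex.Gamma_add_one s hs0, smul_eq_mul, mul_assoc]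
  · rw [hintegrand]
    exact (hint₀.cpow_smul hx).sub (hint₁.cpow_smul hx)
  · rw [hintegrand, integral_sub (hint₀.cpow_smul hx) (hint₁.cpow_smul hx), ← smul_eq_mul,
      smul_sub, ← mellinInv_eq_complex_smul_integral, ← mellinInv_eq_complex_smul_integral,
      ← hf' x hx, mellinInv_eq_of_expDecayOnStrip (by linarith) hdiff₁ hdec₁ hx, sub_eq_add_neg]

/-- The computation in the proof of Theorem 1 of the paper. With `φ`
holomorphic on the strip `0 < Re z < b` (`b > 1`), exponentially bounded of type
`α < π/2`, `σ ∈ (1,b)` and `f` the inverse Mellin transform of `Γ·φ` along `Re ξ = σ`,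
the function `f` is differentiable on `(0,∞)` and the inverse Mellin transform of
`Γ(ξ)(φ(ξ) - φ(ξ-1))` equals `f + f′`, the integral converging absolutely. -/
theorem stmt5 (b : ℝ) (hb : 1 < b) (α : ℝ) (hα0 : 0 ≤ α) (hα : α < π / 2)
    (C : ℝ) (hC : 0 < C) (φ : ℂ → ℂ)
    (hφ : DifferentiableOn ℂ φ {z : ℂ | 0 < z.re ∧ z.re < b})
    (hbound : ∀ z : ℂ, 0 < z.re → z.re < b →
      ‖φ z‖ ≤ C * Real.exp (α * |z.im|))
    (σ : ℝ) (hσ : σ ∈ Set.Ioo (1 : ℝ) b)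
    (f : ℝ → ℂ)
    (hf : ∀ x : ℝ, 0 < x →
      f x = (1 / (2 * (π : ℂ))) *
        ∫ t : ℝ, Complex.Gamma (σ + t * Complex.I) * φ (σ + t * Complex.I) *
          (x : ℂ) ^ (-((σ : ℂ) + t * Complex.I))) :
    ∃ f' : ℝ → ℂ,
      (∀ x : ℝ, 0 < x → HasDerivAt f (f' x) x) ∧
      (∀ x : ℝ, 0 < x →
        Integrable (fun t : ℝ => Complex.Gamma (σ + t * Complex.I) *
          (φ (σ + t * Complex.I) - φ (σ - 1 + t * Complex.I)) *
          (x : ℂ) ^ (-((σ : ℂ) + t * Complex.I)))) ∧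
      (∀ x : ℝ, 0 < x →
        (1 / (2 * (π : ℂ))) *
          (∫ t : ℝ, Complex.Gamma (σ + t * Complex.I) *
            (φ (σ + t * Complex.I) - φ (σ - 1 + t * Complex.I)) *
            (x : ℂ) ^ (-((σ : ℂ) + t * Complex.I))) = f x + f' x) :=
  stmt5_general b α hα C φ hφ hbound σ hσ f hf
end

section
/- Let 0 ≤ α < π/2, ρ > 0 and C > 0. Let f be holomorphic on the right half-plane {Re z > 0} with |f(z)| ≤ C·exp(α·|Im z| + ρ·Re z) for all Re z > 0. Let S be holomorphic on {Re z > 0} with S(z + 1) = S(z) + f(z + 1) for all Re z > 0, and suppose there is M₀ > 0 such that |S(z)| ≤ M₀·exp(α·|Im z|) whenever 0 < Re z ≤ 1. Then there exists M > 0 such that |S(z)| ≤ M·(Re z + 2)·exp(α·|Im z| + ρ·Re z) for all Re z > 0. In particular, S again belongs to the space E. -/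
open Complex Real Set

/-!
Every `z` with `Re z > 0` is `w + n` with `0 < Re w ≤ 1` and `n < Re z`. Unrolling
`S (z + 1) = S z + f (z + 1)` gives `S (w + n) = S w + f (w + 1) + ⋯ + f (w + n)`, and since the
weight `exp (α |Im z| + ρ Re z)` grows along horizontal shifts (`ρ ≥ 0`), each of these `n + 1`
terms is bounded by `M₀` or `C` times the weight at `w + n`.
-/

theorem norm_le_of_norm_sub_le {E : Type*} [SeminormedAddCommGroup E] {u : ℕ → E}
    {W : ℕ → ℝ} {A B : ℝ} (hA : 0 ≤ A) (hB : 0 ≤ B) (hW : Monotone W)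
    (h0 : ‖u 0‖ ≤ A * W 0) (hsucc : ∀ k, ‖u (k + 1) - u k‖ ≤ B * W (k + 1)) (n : ℕ) :
    ‖u n‖ ≤ (A + n * B) * W n := by
  induction n with
  | zero => simpa using h0
  | succ k ih =>
    have hAk : 0 ≤ A + k * B := by positivity
    calc ‖u (k + 1)‖ ≤ ‖u k‖ + ‖u (k + 1) - u k‖ := norm_le_insert' _ _
      _ ≤ (A + k * B) * W (k + 1) + B * W (k + 1) := by
          gcongr
          · exact ih.trans (mul_le_mul_of_nonneg_left (hW k.le_succ) hAk)
          · exact hsucc k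
      _ = (A + ↑(k + 1) * B) * W (k + 1) := by push_cast; ring

theorem exists_nat_lt_le_add_one {x : ℝ} (hx : 0 < x) : ∃ n : ℕ, (n : ℝ) < x ∧ x ≤ n + 1 := by
  have hceil : 1 ≤ ⌈x⌉₊ := Nat.one_le_ceil_iff.mpr hx
  refine ⟨⌈x⌉₊ - 1, ?_, ?_⟩ <;> push_cast [hceil]
  · linarith [Nat.ceil_lt_add_one hx.le]
  · linarith [Nat.le_ceil x]

section IndefiniteSum

variable {α ρ C M₀ : ℝ} {f S : ℂ → ℂ}

theorem norm_shift_le_of_strip_bound (hρ : 0 ≤ ρ) (hC : 0 ≤ C) (hM₀ : 0 ≤ M₀)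
    (hfb : ∀ z : ℂ, 0 < z.re → ‖f z‖ ≤ C * Real.exp (α * |z.im| + ρ * z.re))
    (hrec : ∀ z : ℂ, 0 < z.re → S (z + 1) = S z + f (z + 1))
    (hSb : ∀ z : ℂ, 0 < z.re → z.re ≤ 1 → ‖S z‖ ≤ M₀ * Real.exp (α * |z.im|))
    {w : ℂ} (hw0 : 0 < w.re) (hw1 : w.re ≤ 1) (n : ℕ) :
    ‖S (w + n)‖ ≤ (M₀ + n * C) * Real.exp (α * |w.im| + ρ * (w.re + n)) := by
  refine norm_le_of_norm_sub_le (u := fun k : ℕ ↦ S (w + k))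
    (W := fun k : ℕ ↦ Real.exp (α * |w.im| + ρ * (w.re + k))) hM₀ hC ?_ ?_ ?_ n
  · intro j k hjk
    dsimp only
    gcongr
  · simpa using (hSb w hw0 hw1).trans
      (by gcongr; exact le_add_of_nonneg_right (mul_nonneg hρ hw0.le))
  · intro k
    have hre : 0 < (w + k).re := by simp only [add_re, natCast_re]; positivity
    have hshift : w + ↑(k + 1) = w + k + 1 := by push_cast; ring
    rw [hshift, hrec _ hre, add_sub_cancel_left]
    simpa [add_assoc] using hfb (w + k + 1) (by simp only [add_re, natCast_re, one_re]; positivity)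

end IndefiniteSum

theorem stmt8_general (α ρ C : ℝ) (hρ : 0 < ρ) (hC : 0 < C)
    (f : ℂ → ℂ)
    (hfb : ∀ z : ℂ, 0 < z.re →
      ‖f z‖ ≤ C * Real.exp (α * |z.im| + ρ * z.re))
    (S : ℂ → ℂ)
    (hrec : ∀ z : ℂ, 0 < z.re → S (z + 1) = S z + f (z + 1))
    (M₀ : ℝ) (hM₀ : 0 < M₀)
    (hSb : ∀ z : ℂ, 0 < z.re → z.re ≤ 1 →
      ‖S z‖ ≤ M₀ * Real.exp (α * |z.im|)) :
    ∃ M : ℝ, 0 < M ∧ ∀ z : ℂ, 0 < z.re →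
      ‖S z‖ ≤ M * (z.re + 2) * Real.exp (α * |z.im| + ρ * z.re) := by
  refine ⟨M₀ + C, by positivity, fun z hz ↦ ?_⟩
  obtain ⟨n, hn, hn1⟩ := exists_nat_lt_le_add_one hz
  have hbound := norm_shift_le_of_strip_bound hρ.le hC.le hM₀.le hfb hrec hSb (w := z - n)
    (by simp only [sub_re, natCast_re]; linarith)
    (by simp only [sub_re, natCast_re]; linarith) n
  simp only [sub_add_cancel, sub_im, sub_re, natCast_im, natCast_re, sub_zero] at hbound
  refine hbound.trans (mul_le_mul_of_nonneg_right ?_ (exp_pos _).le)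
  nlinarith

/-- Theorem 2 of the paper. If `f` lies in the exponential space `E`
(holomorphic on the right half-plane with `|f(z)| ≤ C exp(α |Im z| + ρ Re z)`), `S` is an
indefinite sum of `f` on the right half-plane, and `S` is exponentially bounded of type
`α` on the strip `0 < Re z ≤ 1`, then `S` satisfies
`|S(z)| ≤ M (Re z + 2) exp(α |Im z| + ρ Re z)`, so in particular `S ∈ E`. -/
theorem stmt8 (α ρ C : ℝ) (hα0 : 0 ≤ α) (hα : α < π / 2) (hρ : 0 < ρ) (hC : 0 < C)
    (f : ℂ → ℂ)
    (hf : DifferentiableOn ℂ f {z : ℂ | 0 < z.re})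
    (hfb : ∀ z : ℂ, 0 < z.re →
      ‖f z‖ ≤ C * Real.exp (α * |z.im| + ρ * z.re))
    (S : ℂ → ℂ)
    (hS : DifferentiableOn ℂ S {z : ℂ | 0 < z.re})
    (hrec : ∀ z : ℂ, 0 < z.re → S (z + 1) = S z + f (z + 1))
    (M₀ : ℝ) (hM₀ : 0 < M₀)
    (hSb : ∀ z : ℂ, 0 < z.re → z.re ≤ 1 →
      ‖S z‖ ≤ M₀ * Real.exp (α * |z.im|)) :
    ∃ M : ℝ, 0 < M ∧ ∀ z : ℂ, 0 < z.re →
      ‖S z‖ ≤ M * (z.re + 2) * Real.exp (α * |z.im| + ρ * z.re) :=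
  stmt8_general α ρ C hρ hC f hfb S hrec M₀ hM₀ hSb
end

section
/- Let f, S₁, S₂ be holomorphic on the open right half-plane {Re z > 0} and continuous on the closed right half-plane {Re z ≥ 0}, and suppose each of f, S₁, S₂ admits a bound of the form |·(z)| ≤ C·exp(α·|Im z| + ρ·Re z) on {Re z ≥ 0} for some constants C > 0, ρ > 0 and 0 ≤ α < π/2 (which may differ between the three functions). If S₁(z + 1) = S₁(z) + f(z + 1) and S₂(z + 1) = S₂(z) + f(z + 1) for all Re z > 0, and S₁(1) = S₂(1), then S₁(z) = S₂(z) for all z with Re z ≥ 0. That is, the indefinite sum of f within this growth class is unique once normalized at z = 1. -/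
/-!
The difference `D = S₁ - S₂` satisfies `D (z + 1) = D z` on the right half-plane, so it extends
to a `1`-periodic entire function `F` with `‖F z‖ ≤ C exp (α |Im z|)`, `α < π / 2`. In the
variable `q = exp (2πiz)`, `F` becomes holomorphic on `ℂ \ {0}` and grows at most like
`|q|^(-α/2π)` at `0` and `|q|^(α/2π)` at `∞`; as `α < 2π` both singularities are removable, so `F`
is bounded, hence constant by Liouville, hence `0` because `D 1 = 0`.
-/

open Complex Real Set Filter Asymptotics Function
open scoped Topology

theorem Function.Periodic.qParam_periodic {h : ℝ} (hh : h ≠ 0) :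
    Periodic (qParam h) h := by
  intro z
  have hh' : (h : ℂ) ≠ 0 := ofReal_ne_zero.mpr hh
  rw [qParam, qParam,
    show 2 * π * I * (z + h) / h = 2 * π * I * z / h + 2 * π * I by field_simp]
  exact Complex.exp_periodic _

theorem Function.Periodic.boundedAtFilter_of_isBigO_exp {F : ℂ → ℂ} {h α : ℝ} (hh : 0 < h)
    (hper : Periodic F h) (hF : Differentiable ℂ F) (hα : α < 2 * π / h)
    (hb : F =O[comap im atTop] fun z ↦ Real.exp (α * im z)) :
    BoundedAtFilter (comap im atTop) F := by
  have hq : qParam h =O[comap im atTop] fun z ↦ Real.exp (-2 * π * im z / h) :=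
    isBigO_of_le _ fun z ↦ by simp [norm_qParam]
  -- `q F` tends to `0` at `i∞`, so by periodicity it decays like `q`; hence `F = (q F) / q = O(1)`.
  have hqF_zero : ZeroAtFilter (comap im atTop) (qParam h * F) := by
    refine (hq.mul hb).trans_tendsto ?_
    have : Tendsto (fun z : ℂ ↦ (α - 2 * π / h) * im z) (comap im atTop) atBot :=
      tendsto_comap.const_mul_atTop_of_neg (by linarith)
    refine (Real.tendsto_exp_atBot.comp this).congr fun z ↦ ?_
    simp only [comp_apply, ← Real.exp_add]
    ring_nf
  have hqF_decay := exp_decay_of_zero_at_inf hh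
    (fun z ↦ by simp [hper z, qParam_periodic hh.ne' z])
    (Eventually.of_forall fun z ↦ (differentiable_qParam.mul hF) z) hqF_zero
  have hq_inv : (fun z ↦ (qParam h z)⁻¹) =O[comap im atTop]
      fun z ↦ Real.exp (2 * π * im z / h) :=
    isBigO_of_le _ fun z ↦ by simp [norm_qParam, ← Real.exp_neg, neg_div]
  refine ((hq_inv.mul hqF_decay).congr_left fun z ↦ ?_).trans (isBigO_of_le _ fun z ↦ ?_)
  · simp [qParam_ne_zero]
  · simp [← Real.exp_add, neg_div]

theorem Function.Periodic.isBounded_range {F : ℂ → ℂ} {h : ℝ} (hh : 0 < h)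
    (hper : Periodic F h) (hF : Continuous F)
    (hoff : ∃ R M, ∀ z, R ≤ |im z| → ‖F z‖ ≤ M) : Bornology.IsBounded (Set.range F) := by
  obtain ⟨R, M, hM⟩ := hoff
  obtain ⟨M', hM'⟩ := (isCompact_closedBall (0 : ℂ) (h + R)).exists_bound_of_continuousOn
    hF.continuousOn
  refine isBounded_iff_forall_norm_le.mpr ⟨max M M', ?_⟩
  rintro _ ⟨z, rfl⟩
  rcases le_or_gt R |im z| with hz | hz
  · exact (hM z hz).trans (le_max_left _ _)
  have hper_re : Periodic (fun t : ℝ ↦ F (t + im z * I)) h := fun t ↦ by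
    simpa [add_right_comm] using hper (t + im z * I)
  obtain ⟨t, ⟨ht₀, hth⟩, hzt⟩ := hper_re.exists_mem_Ico₀ hh (re z)
  have hw : (t : ℂ) + im z * I ∈ Metric.closedBall (0 : ℂ) (h + R) := by
    rw [mem_closedBall_zero_iff]
    refine (norm_le_abs_re_add_abs_im _).trans ?_
    simp [abs_of_nonneg ht₀]
    linarith
  rw [← re_add_im z]
  exact (hzt ▸ hM' _ hw).trans (le_max_right _ _)

theorem Function.Periodic.exists_norm_le_of_le_im {F : ℂ → ℂ} {h α C : ℝ} (hh : 0 < h)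
    (hper : Periodic F h) (hF : Differentiable ℂ F) (hα : α < 2 * π / h)
    (hb : ∀ z, ‖F z‖ ≤ C * Real.exp (α * |im z|)) : ∃ R M, ∀ z, R ≤ im z → ‖F z‖ ≤ M := by
  have hF_exp : F =O[comap im atTop] fun z ↦ Real.exp (α * im z) := by
    refine IsBigO.of_bound C ?_
    filter_upwards [tendsto_comap.eventually_ge_atTop 0] with z hz
    simpa [abs_of_nonneg hz] using hb z
  obtain ⟨M, hM⟩ := (hper.boundedAtFilter_of_isBigO_exp hh hF hα hF_exp).bound
  obtain ⟨R, hR⟩ := eventually_atTop.mp (eventually_comap.mp hM)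
  exact ⟨R, M, fun z hz ↦ by simpa using hR _ hz z rfl⟩

theorem Function.Periodic.apply_eq_apply_of_norm_le_exp {F : ℂ → ℂ} {h α C : ℝ} (hh : 0 < h)
    (hper : Periodic F h) (hF : Differentiable ℂ F) (hα : α < 2 * π / h)
    (hb : ∀ z, ‖F z‖ ≤ C * Real.exp (α * |im z|)) (z w : ℂ) : F z = F w := by
  obtain ⟨R₁, M₁, h₁⟩ := hper.exists_norm_le_of_le_im hh hF hα hb
  have hper_neg : Periodic (fun z ↦ F (-z)) h := fun z ↦ by simp only [neg_add', hper.sub_eq]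
  obtain ⟨R₂, M₂, h₂⟩ := hper_neg.exists_norm_le_of_le_im hh (hF.comp differentiable_neg) hα
    (fun z ↦ by simpa using hb (-z))
  refine hF.apply_eq_apply_of_bounded (hper.isBounded_range hh hF.continuous
    ⟨max R₁ R₂, max M₁ M₂, fun z hz ↦ ?_⟩) z w
  rcases le_total 0 (im z) with hz₀ | hz₀
  · rw [abs_of_nonneg hz₀] at hz
    exact (h₁ z (le_of_max_le_left hz)).trans (le_max_left _ _)
  · rw [abs_of_nonpos hz₀] at hz
    simpa using (h₂ (-z) (by simpa using le_of_max_le_right hz)).trans (le_max_right _ _)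

noncomputable def periodicExtension (D : ℂ → ℂ) (z : ℂ) : ℂ := D (z - ⌈z.re⌉ + 1)

theorem periodic_periodicExtension (D : ℂ → ℂ) : Periodic (periodicExtension D) 1 := fun z ↦ by
  simp only [periodicExtension, add_re, one_re, Int.ceil_add_one]
  push_cast
  ring_nf

theorem exists_periodicExtension_eq (D : ℂ → ℂ) (z : ℂ) :
    ∃ w, 0 < re w ∧ re w ≤ 1 ∧ im w = im z ∧ periodicExtension D z = D w := by
  refine ⟨z - ⌈z.re⌉ + 1, ?_, ?_, by simp, rfl⟩ <;>
    simp only [add_re, sub_re, intCast_re, one_re]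
  · linarith [Int.ceil_lt_add_one z.re]
  · linarith [Int.le_ceil z.re]

section RightHalfPlane

variable {D : ℂ → ℂ}

theorem apply_add_natCast_eq (hD : ∀ z, 0 < re z → D (z + 1) = D z) {z : ℂ} (hz : 0 < re z)
    (n : ℕ) : D (z + n) = D z := by
  induction n with
  | zero => simp
  | succ n ih =>
    have hzn : 0 < re (z + n) := by simpa using add_pos_of_pos_of_nonneg hz n.cast_nonneg
    rw [Nat.cast_succ, ← add_assoc, hD _ hzn, ih]

theorem apply_add_intCast_eq (hD : ∀ z, 0 < re z → D (z + 1) = D z) {z : ℂ} (hz : 0 < re z)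
    (m : ℤ) (hzm : 0 < re (z + m)) : D (z + m) = D z := by
  obtain ⟨n, rfl | rfl⟩ := Int.eq_nat_or_neg m
  · exact_mod_cast apply_add_natCast_eq hD hz n
  · simpa using (apply_add_natCast_eq hD hzm n).symm

theorem periodicExtension_eq_add_intCast (hD : ∀ z, 0 < re z → D (z + 1) = D z) {z : ℂ}
    (m : ℤ) (hzm : 0 < re (z + m)) : periodicExtension D z = D (z + m) := by
  have hw : 0 < re (z - ⌈z.re⌉ + 1) := by
    simp only [add_re, sub_re, intCast_re, one_re]
    linarith [Int.ceil_lt_add_one z.re]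
  have hshift : z - ⌈z.re⌉ + 1 = z + m + ((1 - ⌈z.re⌉ - m : ℤ) : ℂ) := by push_cast; ring
  rw [hshift] at hw
  rw [periodicExtension, hshift]
  exact apply_add_intCast_eq hD hzm _ hw

theorem periodicExtension_eq (hD : ∀ z, 0 < re z → D (z + 1) = D z) {z : ℂ} (hz : 0 < re z) :
    periodicExtension D z = D z := by
  simpa using periodicExtension_eq_add_intCast hD 0 (by simpa using hz)

theorem differentiable_periodicExtension (hD : ∀ z, 0 < re z → D (z + 1) = D z)
    (hdiff : DifferentiableOn ℂ D {z | 0 < re z}) : Differentiable ℂ (periodicExtension D) := by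
  intro z₀
  have hnear : ∀ᶠ z in 𝓝 z₀, periodicExtension D z = D (z + (1 - ⌊z₀.re⌋ : ℤ)) := by
    filter_upwards [(continuous_re.tendsto z₀).eventually (lt_mem_nhds (sub_one_lt z₀.re))]
      with z hz
    refine periodicExtension_eq_add_intCast hD _ ?_
    simp only [add_re, intCast_re]
    push_cast
    linarith [Int.floor_le z₀.re, show z₀.re - 1 < z.re from hz]
  have hz₀ : 0 < re (z₀ + (1 - ⌊z₀.re⌋ : ℤ)) := by
    simp only [add_re, intCast_re]
    push_cast
    linarith [Int.floor_le z₀.re]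
  refine DifferentiableAt.congr_of_eventuallyEq ?_ hnear
  exact (hdiff.differentiableAt ((isOpen_lt continuous_const continuous_re).mem_nhds hz₀)).comp z₀
    (differentiableAt_id.add_const _)

end RightHalfPlane

theorem norm_le_exp_im_of_re_le_one {S : ℂ → ℂ} {C ρ α β : ℝ} (hC : 0 ≤ C) (hρ : 0 ≤ ρ)
    (hαβ : α ≤ β) (hb : ∀ z, 0 ≤ re z → ‖S z‖ ≤ C * Real.exp (α * |im z| + ρ * re z))
    {w : ℂ} (hw₀ : 0 ≤ re w) (hw₁ : re w ≤ 1) :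
    ‖S w‖ ≤ C * Real.exp ρ * Real.exp (β * |im w|) := by
  calc ‖S w‖ ≤ C * Real.exp (α * |im w| + ρ * re w) := hb w hw₀
    _ ≤ C * Real.exp (β * |im w| + ρ) := by
      gcongr
      exact mul_le_of_le_one_right hρ hw₁
    _ = C * Real.exp ρ * Real.exp (β * |im w|) := by rw [Real.exp_add]; ring

theorem stmt9_general (f S₁ S₂ : ℂ → ℂ)
    (hS₁ : DifferentiableOn ℂ S₁ {z : ℂ | 0 < z.re})
    (hS₁c : ContinuousOn S₁ {z : ℂ | 0 ≤ z.re})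
    (hS₂ : DifferentiableOn ℂ S₂ {z : ℂ | 0 < z.re})
    (hS₂c : ContinuousOn S₂ {z : ℂ | 0 ≤ z.re})
    (hS₁b : ∃ C ρ α : ℝ, 0 < C ∧ 0 < ρ ∧ 0 ≤ α ∧ α < π / 2 ∧
      ∀ z : ℂ, 0 ≤ z.re → ‖S₁ z‖ ≤ C * Real.exp (α * |z.im| + ρ * z.re))
    (hS₂b : ∃ C ρ α : ℝ, 0 < C ∧ 0 < ρ ∧ 0 ≤ α ∧ α < π / 2 ∧
      ∀ z : ℂ, 0 ≤ z.re → ‖S₂ z‖ ≤ C * Real.exp (α * |z.im| + ρ * z.re))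
    (hrec₁ : ∀ z : ℂ, 0 < z.re → S₁ (z + 1) = S₁ z + f (z + 1))
    (hrec₂ : ∀ z : ℂ, 0 < z.re → S₂ (z + 1) = S₂ z + f (z + 1))
    (hnorm : S₁ 1 = S₂ 1) :
    ∀ z : ℂ, 0 ≤ z.re → S₁ z = S₂ z := by
  obtain ⟨C₁, ρ₁, α₁, hC₁, hρ₁, -, hα₁, hb₁⟩ := hS₁b
  obtain ⟨C₂, ρ₂, α₂, hC₂, hρ₂, -, hα₂, hb₂⟩ := hS₂b
  set D : ℂ → ℂ := fun z ↦ S₁ z - S₂ z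
  have hD : ∀ z, 0 < re z → D (z + 1) = D z := fun z hz ↦ by
    simp only [D, hrec₁ z hz, hrec₂ z hz]; ring
  have hbound : ∀ z, ‖periodicExtension D z‖ ≤
      (C₁ * Real.exp ρ₁ + C₂ * Real.exp ρ₂) * Real.exp (max α₁ α₂ * |im z|) := fun z ↦ by
    obtain ⟨w, hw₀, hw₁, hwz, hDw⟩ := exists_periodicExtension_eq D z
    rw [hDw, ← hwz, add_mul]
    exact (norm_sub_le _ _).trans (add_le_add
      (norm_le_exp_im_of_re_le_one hC₁.le hρ₁.le (le_max_left _ _) hb₁ hw₀.le hw₁)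
      (norm_le_exp_im_of_re_le_one hC₂.le hρ₂.le (le_max_right _ _) hb₂ hw₀.le hw₁))
  have hconst := (periodic_periodicExtension D).apply_eq_apply_of_norm_le_exp one_pos
    (differentiable_periodicExtension hD (hS₁.sub hS₂))
    (by rw [div_one]; linarith [max_lt hα₁ hα₂, Real.pi_pos]) hbound
  have hpos : EqOn S₁ S₂ {z | 0 < re z} := fun z hz ↦ by
    rw [← sub_eq_zero]
    change D z = 0
    rw [← periodicExtension_eq hD hz, hconst z 1, periodicExtension_eq hD one_pos]
    simp [D, hnorm]
  exact hpos.of_subset_closure (t := {z | 0 ≤ re z}) hS₁c hS₂c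
    (ofPred_subset_ofPred.mpr fun _ ↦ le_of_lt) (closure_setOfPred_lt_re 0).ge

/-- Uniqueness of the indefinite sum in the exponential space `E`. If
`f, S₁, S₂` are holomorphic on the open right half-plane, continuous on the closed one,
each bounded by `C exp(α |Im z| + ρ Re z)` with `α < π/2`, and `S₁, S₂` are both
indefinite sums of `f` with `S₁(1) = S₂(1)`, then `S₁ = S₂` on `Re z ≥ 0`. -/
theorem stmt9 (f S₁ S₂ : ℂ → ℂ)
    (hf : DifferentiableOn ℂ f {z : ℂ | 0 < z.re})
    (hfc : ContinuousOn f {z : ℂ | 0 ≤ z.re})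
    (hS₁ : DifferentiableOn ℂ S₁ {z : ℂ | 0 < z.re})
    (hS₁c : ContinuousOn S₁ {z : ℂ | 0 ≤ z.re})
    (hS₂ : DifferentiableOn ℂ S₂ {z : ℂ | 0 < z.re})
    (hS₂c : ContinuousOn S₂ {z : ℂ | 0 ≤ z.re})
    (hfb : ∃ C ρ α : ℝ, 0 < C ∧ 0 < ρ ∧ 0 ≤ α ∧ α < π / 2 ∧
      ∀ z : ℂ, 0 ≤ z.re → ‖f z‖ ≤ C * Real.exp (α * |z.im| + ρ * z.re))
    (hS₁b : ∃ C ρ α : ℝ, 0 < C ∧ 0 < ρ ∧ 0 ≤ α ∧ α < π / 2 ∧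
      ∀ z : ℂ, 0 ≤ z.re → ‖S₁ z‖ ≤ C * Real.exp (α * |z.im| + ρ * z.re))
    (hS₂b : ∃ C ρ α : ℝ, 0 < C ∧ 0 < ρ ∧ 0 ≤ α ∧ α < π / 2 ∧
      ∀ z : ℂ, 0 ≤ z.re → ‖S₂ z‖ ≤ C * Real.exp (α * |z.im| + ρ * z.re))
    (hrec₁ : ∀ z : ℂ, 0 < z.re → S₁ (z + 1) = S₁ z + f (z + 1))
    (hrec₂ : ∀ z : ℂ, 0 < z.re → S₂ (z + 1) = S₂ z + f (z + 1))
    (hnorm : S₁ 1 = S₂ 1) :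
    ∀ z : ℂ, 0 ≤ z.re → S₁ z = S₂ z :=
  stmt9_general f S₁ S₂ hS₁ hS₁c hS₂ hS₂c hS₁b hS₂b hrec₁ hrec₂ hnorm
end

section
/- Let f be holomorphic on the open right half-plane {Re z > 0} and continuous on the closed right half-plane {Re z ≥ 0}, and suppose there exist constants C > 0, ρ > 0 and 0 ≤ α < π/2 such that |f(z)| ≤ C·exp(α·|Im z| + ρ·Re z) for all Re z ≥ 0. If f(n) = 0 for every integer n ≥ 1, then f(z) = 0 for all z with Re z ≥ 0. -/
/-!
Put `F z = f (z + 1) exp (-ρ (z + 1))`: it vanishes at `0, 1, 2, …` and `‖F z‖ ≤ C exp (α |Im z|)`.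
Dividing by `sin (π z)` gives a holomorphic `g`, bounded on the closed right half-plane by
maximum modulus on rectangles, and `O(exp (-δ |y|))` on the imaginary axis with `δ = π - α > 0`.
Phragmén–Lindelöf in the right half-plane upgrades this to `‖g z‖ ≤ K exp (-δ |Im z|)`, and
Phragmén–Lindelöf in the sector `|arg z| ≤ π / 4` then gives `‖g x‖ ≤ K exp (-δ x)` for `x ≥ 0`.
So `exp (δ z) g` satisfies the same hypotheses with the same constant `K`; iterating,
`‖g z‖ exp (n δ Re z) ≤ K` for every `n`, whence `g = 0`, `F = 0` and `f = 0`.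
-/

open Complex Real Set Filter Topology Bornology Asymptotics

theorem Real.exp_div_four_le_sinh {t : ℝ} (ht : 1 ≤ t) : Real.exp t / 4 ≤ Real.sinh t := by
  have h2 : 2 ≤ Real.exp t := by linarith [Real.add_one_le_exp t]
  have hneg : Real.exp (-t) * Real.exp t = 1 := by
    rw [← Real.exp_add, neg_add_cancel, Real.exp_zero]
  rw [Real.sinh_eq]
  nlinarith [Real.exp_pos (-t)]

namespace Complex

theorem norm_sin_sq (z : ℂ) : ‖sin z‖ ^ 2 = Real.sin z.re ^ 2 + Real.sinh z.im ^ 2 := by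
  conv_lhs => rw [← re_add_im z, sin_add_mul_I]
  rw [← ofReal_sin, ← ofReal_cos, ← ofReal_cosh, ← ofReal_sinh, Complex.sq_norm, normSq_apply]
  simp only [add_re, add_im, mul_re, mul_im, ofReal_re, ofReal_im, I_re, I_im]
  nlinarith [Real.cosh_sq z.im, Real.sin_sq_add_cos_sq z.re]

theorem abs_sin_re_le_norm_sin (z : ℂ) : |Real.sin z.re| ≤ ‖sin z‖ :=
  abs_le_of_sq_le_sq' (by nlinarith [norm_sin_sq z]) (norm_nonneg _) |> abs_le.2

theorem abs_sinh_im_le_norm_sin (z : ℂ) : |Real.sinh z.im| ≤ ‖sin z‖ :=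
  abs_le_of_sq_le_sq' (by nlinarith [norm_sin_sq z]) (norm_nonneg _) |> abs_le.2

theorem sin_pi_mul_eq_zero_iff {z : ℂ} : sin (π * z) = 0 ↔ ∃ k : ℤ, z = k := by
  rw [sin_eq_zero_iff]
  refine exists_congr fun k => ?_
  rw [mul_comm, mul_left_inj' (ofReal_ne_zero.2 Real.pi_ne_zero)]

theorem deriv_sin_pi_mul_ne_zero {z : ℂ} (hz : sin (π * z) = 0) :
    deriv (fun w => sin (π * w)) z ≠ 0 := by
  have hderiv : HasDerivAt (fun w => sin (π * w)) (cos (π * z) * π) z := by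
    simpa using ((hasDerivAt_id z).const_mul (π : ℂ)).csin
  rw [hderiv.deriv]
  have hcos : cos (π * z) ≠ 0 := fun h => by simpa [hz, h] using sin_sq_add_cos_sq (π * z)
  exact mul_ne_zero hcos (ofReal_ne_zero.2 Real.pi_ne_zero)

theorem one_le_norm_sin_pi_mul {z : ℂ} {k : ℤ} (hz : z.re = k + 1 / 2) : 1 ≤ ‖sin (π * z)‖ := by
  refine le_of_eq_of_le ?_ (abs_sin_re_le_norm_sin _)
  rw [re_ofReal_mul, hz, show π * (k + 1 / 2) = k * π + π / 2 by ring, Real.sin_add_pi_div_two,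
    Real.abs_cos_int_mul_pi]

theorem exp_div_four_le_norm_sin_pi_mul {z : ℂ} (hz : 1 ≤ |z.im|) :
    Real.exp (π * |z.im|) / 4 ≤ ‖sin (π * z)‖ := by
  refine le_trans ?_ (abs_sinh_im_le_norm_sin _)
  rw [im_ofReal_mul, Real.abs_sinh, abs_mul, abs_of_pos Real.pi_pos]
  exact Real.exp_div_four_le_sinh (by nlinarith [Real.pi_gt_three])

end Complex

/-- `F / S`, completed at the zeros of `S` by the value `F' / S'` suggested by l'Hôpital's rule. -/
noncomputable def removableDiv (F S : ℂ → ℂ) (z : ℂ) : ℂ :=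
  if S z = 0 then deriv F z / deriv S z else F z / S z

theorem removableDiv_of_ne_zero {F S : ℂ → ℂ} {z : ℂ} (hz : S z ≠ 0) :
    removableDiv F S z = F z / S z :=
  if_neg hz

theorem norm_removableDiv_le {F S : ℂ → ℂ} {z : ℂ} {c : ℝ} (hc : 0 < c) (hS : c ≤ ‖S z‖) :
    ‖removableDiv F S z‖ ≤ ‖F z‖ / c := by
  rw [removableDiv_of_ne_zero (norm_pos_iff.1 (hc.trans_le hS)), norm_div]
  exact div_le_div_of_nonneg_left (norm_nonneg _) hc hS

theorem differentiableAt_removableDiv {F S : ℂ → ℂ} {z : ℂ} (hF : AnalyticAt ℂ F z)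
    (hS : AnalyticAt ℂ S z) (hFS : S z = 0 → F z = 0) (hS' : S z = 0 → deriv S z ≠ 0) :
    DifferentiableAt ℂ (removableDiv F S) z := by
  by_cases hz : S z = 0
  · obtain ⟨p, hp⟩ := hF
    obtain ⟨q, hq⟩ := hS
    have hFd : AnalyticAt ℂ (dslope F z) z := ⟨_, hp.has_fpower_series_dslope_fslope⟩
    have hSd : AnalyticAt ℂ (dslope S z) z := ⟨_, hq.has_fpower_series_dslope_fslope⟩
    have hSz : dslope S z z ≠ 0 := by rw [dslope_same]; exact hS' hz
    refine (hFd.div hSd hSz).differentiableAt.congr_of_eventuallyEq ?_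
    filter_upwards [hSd.continuousAt.eventually_ne hSz] with w hw
    change _ = dslope F z w / dslope S z w
    rcases eq_or_ne w z with rfl | hwz
    · rw [removableDiv, if_pos hz, dslope_same, dslope_same]
    · have hsub : w - z ≠ 0 := sub_ne_zero.2 hwz
      have hF' := sub_smul_dslope F z w
      have hS'' := sub_smul_dslope S z w
      rw [hz, sub_zero, smul_eq_mul] at hS''
      rw [hFS hz, sub_zero, smul_eq_mul] at hF'
      rw [removableDiv_of_ne_zero (by rw [← hS'']; exact mul_ne_zero hsub hw), ← hF', ← hS'',
        mul_div_mul_left _ _ hsub]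
  · refine ((hF.differentiableAt.div hS.differentiableAt hz)).congr_of_eventuallyEq ?_
    filter_upwards [hS.continuousAt.eventually_ne hz] with w hw
    exact removableDiv_of_ne_zero hw

section PhragmenLindelof

variable {E : Type*} [NormedAddCommGroup E]

theorem isBigO_exp_rpow_of_norm_le_exp {f : ℂ → E} {s : Set ℂ} {B b : ℝ}
    (hf : ∀ z ∈ s, ‖f z‖ ≤ B * Real.exp (b * ‖z‖)) :
    ∃ c < (2 : ℝ), ∃ B, f =O[cobounded ℂ ⊓ 𝓟 s] fun z => Real.exp (B * ‖z‖ ^ c) := by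
  refine ⟨1, one_lt_two, b, isBigO_iff.2 ⟨B, eventually_inf_principal.2 (.of_forall ?_)⟩⟩
  intro z hz
  rw [Real.rpow_one, Real.norm_of_nonneg (Real.exp_pos _).le]
  exact hf z hz

variable [NormedSpace ℂ E]

theorem norm_cexp_smul (u : ℂ) (v : E) : ‖cexp u • v‖ = ‖v‖ * Real.exp u.re := by
  rw [norm_smul, norm_exp, mul_comm]

theorem norm_mul_exp_abs_im_le_of_imaginaryAxis {h : ℂ → E} {B b δ K : ℝ} (hδ : 0 ≤ δ)
    (hd : DiffContOnCl ℂ h {z | 0 < z.re})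
    (hgrowth : ∀ z : ℂ, 0 < z.re → ‖h z‖ ≤ B * Real.exp (b * ‖z‖))
    (hre : IsBoundedUnder (· ≤ ·) atTop fun x : ℝ => ‖h x‖)
    (him : ∀ y : ℝ, ‖h (y * I)‖ * Real.exp (δ * |y|) ≤ K) {z : ℂ} (hz : 0 ≤ z.re) :
    ‖h z‖ * Real.exp (δ * |z.im|) ≤ K := by
  have twisted : ∀ t : ℝ, |t| ≤ δ → ‖h z‖ * Real.exp (t * z.im) ≤ K := by
    intro t ht
    have hnorm : ∀ w : ℂ, ‖cexp (-(t * I) * w) • h w‖ = ‖h w‖ * Real.exp (t * w.im) := by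
      intro w
      rw [norm_cexp_smul]
      simp
    have hexp : ∀ w : ℂ, t * w.im ≤ δ * ‖w‖ := fun w => (le_abs_self _).trans <| by
      rw [abs_mul]
      exact mul_le_mul ht (abs_im_le_norm w) (abs_nonneg _) hδ
    have hv : DiffContOnCl ℂ (fun w => cexp (-(t * I) * w) • h w) {z | 0 < z.re} :=
      (differentiable_id.const_mul _).cexp.diffContOnCl.smul hd
    rw [← hnorm]
    refine PhragmenLindelof.right_half_plane_of_bounded_on_real hv
      (isBigO_exp_rpow_of_norm_le_exp (b := b + δ) (B := B) fun w hw => ?_) ?_ (fun y => ?_) hz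
    · rw [hnorm, add_mul, Real.exp_add, ← mul_assoc]
      exact mul_le_mul (hgrowth w hw) (Real.exp_le_exp.2 (hexp w)) (Real.exp_pos _).le
        ((norm_nonneg _).trans (hgrowth w hw))
    · simpa only [hnorm, ofReal_im, mul_zero, Real.exp_zero, mul_one] using hre
    · have hty : t * y ≤ δ * |y| :=
        (le_abs_self _).trans (by rw [abs_mul]; exact mul_le_mul_of_nonneg_right ht (abs_nonneg y))
      rw [hnorm]
      refine le_trans ?_ (him y)
      simpa using mul_le_mul_of_nonneg_left (Real.exp_le_exp.2 hty) (norm_nonneg (h (y * I)))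
  rcases abs_cases z.im with ⟨habs, -⟩ | ⟨habs, -⟩
  · simpa [habs] using twisted δ (abs_of_nonneg hδ).le
  · simpa [habs] using twisted (-δ) (by rw [abs_neg, abs_of_nonneg hδ])

theorem norm_mul_exp_le_of_norm_mul_exp_abs_im_le {h : ℂ → E} {δ K : ℝ} (hδ : 0 ≤ δ)
    (hd : DiffContOnCl ℂ h {z | 0 < z.re})
    (hdecay : ∀ z : ℂ, 0 ≤ z.re → ‖h z‖ * Real.exp (δ * |z.im|) ≤ K) {x : ℝ} (hx : 0 ≤ x) :
    ‖h x‖ * Real.exp (δ * x) ≤ K := by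
  -- `w ↦ (1 - I) w` maps the first quadrant onto the sector `|arg z| ≤ π / 4`,
  -- on whose edges `exp (δ z) h z` is bounded by `K`
  set u : ℂ → E := fun w => cexp (δ * ((1 - I) * w)) • h ((1 - I) * w)
  have hre : ∀ w : ℂ, ((1 - I) * w).re = w.re + w.im := fun w => by simp
  have him : ∀ w : ℂ, ((1 - I) * w).im = w.im - w.re := fun w => by simp; ring
  have hu : ∀ w : ℂ, 0 ≤ w.re → 0 ≤ w.im →
      ‖u w‖ ≤ K * Real.exp (δ * (w.re + w.im - |w.im - w.re|)) := by
    intro w ha hb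
    have hw := hdecay ((1 - I) * w) (by rw [hre]; positivity)
    rw [him] at hw
    calc ‖u w‖ = ‖h ((1 - I) * w)‖ * Real.exp (δ * |w.im - w.re|) *
          Real.exp (δ * (w.re + w.im - |w.im - w.re|)) := by
          rw [norm_cexp_smul, mul_assoc, ← Real.exp_add, re_ofReal_mul, hre]
          ring_nf
      _ ≤ K * Real.exp (δ * (w.re + w.im - |w.im - w.re|)) := by gcongr
  have hK : 0 ≤ K := (mul_nonneg (norm_nonneg _) (Real.exp_pos _).le).trans (hdecay 0 le_rfl)
  have hud : DiffContOnCl ℂ u (Ioi 0 ×ℂ Ioi 0) := by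
    refine (differentiable_id.const_mul _ |>.const_mul _ |>.cexp.diffContOnCl).smul
      (hd.comp (differentiable_id.const_mul _).diffContOnCl fun w hw => ?_)
    rw [mem_reProdIm] at hw
    show 0 < ((1 - I) * w).re
    rw [hre]
    exact add_pos hw.1 hw.2
  have hx2 : (1 - I) * (x / 2 + x / 2 * I) = x := by
    apply Complex.ext <;> simp
  have key : ‖u (x / 2 + x / 2 * I)‖ ≤ K := by
    refine PhragmenLindelof.quadrant_I hud
      (isBigO_exp_rpow_of_norm_le_exp (B := K) (b := 2 * δ) fun w hw => ?_) (fun t ht => ?_)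
      (fun t ht => ?_) (by simp; positivity) (by simp; positivity)
    · rw [mem_reProdIm] at hw
      refine (hu w hw.1.le hw.2.le).trans (mul_le_mul_of_nonneg_left (Real.exp_le_exp.2 ?_) hK)
      have := abs_re_le_norm w
      have := abs_im_le_norm w
      nlinarith [abs_nonneg (w.im - w.re), le_abs_self w.re, le_abs_self w.im]
    · simpa [abs_of_nonneg ht] using hu t (by simpa using ht) (by simp)
    · simpa [abs_of_nonneg ht] using hu (t * I) (by simp) (by simpa using ht)
  rwa [show u (x / 2 + x / 2 * I) = cexp (δ * x) • h x by simp only [u, hx2], norm_cexp_smul,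
    re_ofReal_mul, ofReal_re] at key

theorem norm_mul_exp_le_of_imaginaryAxis_decay {g : ℂ → E} {M δ K : ℝ} (hδ : 0 ≤ δ)
    (hd : DiffContOnCl ℂ g {z | 0 < z.re}) (hbdd : ∀ z : ℂ, 0 ≤ z.re → ‖g z‖ ≤ M)
    (him : ∀ y : ℝ, ‖g (y * I)‖ * Real.exp (δ * |y|) ≤ K) (n : ℕ) {z : ℂ} (hz : 0 ≤ z.re) :
    ‖g z‖ * Real.exp (n * δ * z.re + δ * |z.im|) ≤ K := by
  set h : ℝ → ℂ → E := fun a w => cexp (a * w) • g w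
  have hnorm : ∀ a w, ‖h a w‖ = ‖g w‖ * Real.exp (a * w.re) := fun a w => by
    rw [norm_cexp_smul, re_ofReal_mul]
  have hdh : ∀ a : ℝ, DiffContOnCl ℂ (h a) {z | 0 < z.re} := fun a =>
    (differentiable_id.const_mul _).cexp.diffContOnCl.smul hd
  have hM : 0 ≤ M := (norm_nonneg _).trans (hbdd 0 le_rfl)
  have step : ∀ a : ℝ, 0 ≤ a → IsBoundedUnder (· ≤ ·) atTop (fun x : ℝ => ‖h a x‖) →
      ∀ z : ℂ, 0 ≤ z.re → ‖h a z‖ * Real.exp (δ * |z.im|) ≤ K := by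
    intro a ha hre z hz
    refine norm_mul_exp_abs_im_le_of_imaginaryAxis hδ (hdh a) (B := M) (b := a) (fun w hw => ?_)
      hre (fun y => ?_) hz
    · rw [hnorm]
      exact mul_le_mul (hbdd w hw.le)
        (Real.exp_le_exp.2 (mul_le_mul_of_nonneg_left (re_le_norm w) ha)) (Real.exp_pos _).le hM
    · simpa [hnorm] using him y
  suffices ∀ z : ℂ, 0 ≤ z.re → ‖h (n * δ) z‖ * Real.exp (δ * |z.im|) ≤ K by
    simpa only [hnorm, mul_assoc, ← Real.exp_add] using this z hz
  induction n with
  | zero =>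
    refine step _ (by simp) (isBoundedUnder_of_eventually_le (a := M)
      ((eventually_ge_atTop 0).mono fun x hx => ?_))
    simpa [hnorm] using hbdd x (by simpa using hx)
  | succ n ih =>
    refine step _ (by positivity) (isBoundedUnder_of_eventually_le (a := K)
      ((eventually_ge_atTop 0).mono fun x hx => ?_))
    have := norm_mul_exp_le_of_norm_mul_exp_abs_im_le hδ (hdh _) ih hx
    rw [hnorm] at this ⊢
    simpa [mul_assoc, ← Real.exp_add, add_mul] using this

theorem eqOn_zero_of_imaginaryAxis_decay {g : ℂ → E} {M δ K : ℝ} (hδ : 0 < δ)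
    (hd : DiffContOnCl ℂ g {z | 0 < z.re}) (hbdd : ∀ z : ℂ, 0 ≤ z.re → ‖g z‖ ≤ M)
    (him : ∀ y : ℝ, ‖g (y * I)‖ * Real.exp (δ * |y|) ≤ K) : EqOn g 0 {z | 0 < z.re} := by
  intro z hz
  by_contra hne
  have hgrow : Tendsto (fun n : ℕ => ‖g z‖ * Real.exp (δ * z.re) ^ n) atTop atTop :=
    (tendsto_pow_atTop_atTop_of_one_lt (Real.one_lt_exp_iff.2 (mul_pos hδ hz))).const_mul_atTop
      (norm_pos_iff.2 hne)
  obtain ⟨n, hn⟩ := (hgrow.eventually_gt_atTop K).exists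
  refine hn.not_ge ((mul_le_mul_of_nonneg_left ?_ (norm_nonneg _)).trans
    (norm_mul_exp_le_of_imaginaryAxis_decay hδ.le hd hbdd him n hz.le))
  rw [← Real.exp_nat_mul, ← mul_assoc]
  exact Real.exp_le_exp.2 (le_add_of_nonneg_right (by positivity))

theorem norm_le_of_norm_le_on_rectangle_boundary {g : ℂ → E} {a b c d M : ℝ} (hab : a < b)
    (hcd : c < d)
    (hg : DifferentiableOn ℂ g (Icc a b ×ℂ Icc c d))
    (hvert : ∀ z : ℂ, (z.re = a ∨ z.re = b) → z.im ∈ Icc c d → ‖g z‖ ≤ M)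
    (hhoriz : ∀ z : ℂ, z.re ∈ Icc a b → (z.im = c ∨ z.im = d) → ‖g z‖ ≤ M)
    {z : ℂ} (hz : z ∈ Icc a b ×ℂ Icc c d) : ‖g z‖ ≤ M := by
  have hcl : closure (Ioo a b ×ℂ Ioo c d) = Icc a b ×ℂ Icc c d := by
    rw [closure_reProdIm, closure_Ioo hab.ne, closure_Ioo hcd.ne]
  refine Complex.norm_le_of_forall_mem_frontier_norm_le
    ((Metric.isBounded_Ioo a b).reProdIm (Metric.isBounded_Ioo c d))
    (DifferentiableOn.diffContOnCl (hcl ▸ hg)) (fun w hw => ?_) (hcl ▸ hz)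
  rw [frontier_reProdIm, closure_Ioo hab.ne, closure_Ioo hcd.ne, frontier_Ioo hab,
    frontier_Ioo hcd] at hw
  rcases hw with ⟨hre, him⟩ | ⟨hre, him⟩
  · exact hhoriz w hre him
  · exact hvert w hre him

end PhragmenLindelof

section Carlson

variable {F : ℂ → ℂ} {C α : ℝ}

theorem eq_zero_of_sin_pi_mul_eq_zero (hzero : ∀ n : ℕ, F n = 0) {z : ℂ} (hz : -1 < z.re)
    (hS : sin (π * z) = 0) : F z = 0 := by
  obtain ⟨k, rfl⟩ := sin_pi_mul_eq_zero_iff.1 hS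
  have hk : (-1 : ℤ) < k := by exact_mod_cast (by simpa using hz : (-1 : ℝ) < k)
  lift k to ℕ using by omega
  exact_mod_cast hzero k

theorem differentiableOn_removableDiv_sin_pi_mul (hF : DifferentiableOn ℂ F {z | -1 < z.re})
    (hzero : ∀ n : ℕ, F n = 0) :
    DifferentiableOn ℂ (removableDiv F fun z => sin (π * z)) {z | -1 < z.re} := by
  intro z hz
  have hS : AnalyticAt ℂ (fun z => Complex.sin (π * z)) z :=
    (differentiable_id.const_mul _).csin.analyticAt z
  exact (differentiableAt_removableDiv
    (hF.analyticAt ((isOpen_lt continuous_const continuous_re).mem_nhds hz)) hS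
    (eq_zero_of_sin_pi_mul_eq_zero hzero hz) deriv_sin_pi_mul_ne_zero).differentiableWithinAt

theorem norm_removableDiv_sin_pi_mul_mul_exp_le
    (hbound : ∀ z : ℂ, -1 < z.re → ‖F z‖ ≤ C * Real.exp (α * |z.im|)) {z : ℂ} (hz : -1 < z.re)
    (him : 1 ≤ |z.im|) :
    ‖removableDiv F (fun z => sin (π * z)) z‖ * Real.exp ((π - α) * |z.im|) ≤ 4 * C := by
  calc ‖removableDiv F (fun z => sin (π * z)) z‖ * Real.exp ((π - α) * |z.im|)
      ≤ ‖F z‖ / (Real.exp (π * |z.im|) / 4) * Real.exp ((π - α) * |z.im|) := by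
        gcongr
        exact norm_removableDiv_le (by positivity) (exp_div_four_le_norm_sin_pi_mul him)
    _ ≤ C * Real.exp (α * |z.im|) / (Real.exp (π * |z.im|) / 4) *
          Real.exp ((π - α) * |z.im|) := by gcongr; exact hbound z hz
    _ = 4 * C := by
      rw [sub_mul, Real.exp_sub]
      field_simp

theorem norm_removableDiv_sin_pi_mul_le (hC : 0 ≤ C) (hα0 : 0 ≤ α) (hα : α ≤ π)
    (hF : DifferentiableOn ℂ F {z | -1 < z.re})
    (hbound : ∀ z : ℂ, -1 < z.re → ‖F z‖ ≤ C * Real.exp (α * |z.im|))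
    (hzero : ∀ n : ℕ, F n = 0) {z : ℂ} (hz : 0 ≤ z.re) :
    ‖removableDiv F (fun z => sin (π * z)) z‖ ≤ 4 * C * Real.exp α := by
  have h4C : 4 * C ≤ 4 * C * Real.exp α := le_mul_of_one_le_right (by positivity)
    (Real.one_le_exp hα0)
  have hhoriz : ∀ w : ℂ, -1 < w.re → 1 ≤ |w.im| →
      ‖removableDiv F (fun z => sin (π * z)) w‖ ≤ 4 * C * Real.exp α := by
    intro w hw him
    have hexp : 1 ≤ Real.exp ((π - α) * |w.im|) := Real.one_le_exp (by nlinarith [abs_nonneg w.im])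
    exact (le_mul_of_one_le_right (norm_nonneg _) hexp).trans
      ((norm_removableDiv_sin_pi_mul_mul_exp_le hbound hw him).trans h4C)
  rcases le_total 1 |z.im| with him | him
  · exact hhoriz z (by linarith) him
  set k := round z.re
  have hzk := abs_le.1 (abs_sub_round z.re)
  have hk : (0 : ℝ) ≤ k := by
    have : (-1 : ℤ) < k := by exact_mod_cast (by linarith : (-1 : ℝ) < k)
    exact_mod_cast (by omega : 0 ≤ k)
  refine norm_le_of_norm_le_on_rectangle_boundary (a := k - 1 / 2) (b := k + 1 / 2) (c := -1)
    (d := 1) (by linarith) (by norm_num)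
    ((differentiableOn_removableDiv_sin_pi_mul hF hzero).mono fun w hw => ?_) (fun w hre hwim => ?_)
    (fun w hre hwim => hhoriz w (by linarith [hre.1]) (by rcases hwim with h | h <;> simp [h]))
    ⟨⟨by linarith, by linarith⟩, abs_le.1 him⟩
  · show -1 < w.re
    linarith [hw.1.1]
  · obtain ⟨j, hj⟩ : ∃ j : ℤ, w.re = j + 1 / 2 := by
      rcases hre with h | h
      · exact ⟨k - 1, by push_cast; linarith⟩
      · exact ⟨k, h⟩
    calc ‖removableDiv F (fun z => sin (π * z)) w‖ ≤ ‖F w‖ / 1 :=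
          norm_removableDiv_le one_pos (one_le_norm_sin_pi_mul hj)
      _ ≤ C * Real.exp α := by
          rw [div_one]
          refine (hbound w (by rcases hre with h | h <;> linarith)).trans ?_
          gcongr
          exact mul_le_of_le_one_right hα0 (abs_le.2 hwim)
      _ ≤ 4 * C * Real.exp α := by gcongr; linarith

theorem eqOn_zero_of_natCast_eq_zero (hC : 0 ≤ C) (hα0 : 0 ≤ α) (hα : α < π)
    (hF : DifferentiableOn ℂ F {z | -1 < z.re})
    (hbound : ∀ z : ℂ, -1 < z.re → ‖F z‖ ≤ C * Real.exp (α * |z.im|))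
    (hzero : ∀ n : ℕ, F n = 0) : EqOn F 0 {z | -1 < z.re} := by
  set g := removableDiv F fun z => sin (π * z)
  have hg := differentiableOn_removableDiv_sin_pi_mul hF hzero
  have hbdd : ∀ z : ℂ, 0 ≤ z.re → ‖g z‖ ≤ 4 * C * Real.exp α := fun z hz =>
    norm_removableDiv_sin_pi_mul_le hC hα0 hα.le hF hbound hzero hz
  have him : ∀ y : ℝ, ‖g (y * I)‖ * Real.exp ((π - α) * |y|) ≤ 4 * C * Real.exp α * Real.exp π := by
    intro y
    rcases le_total 1 |y| with hy | hy
    · have hdecay := norm_removableDiv_sin_pi_mul_mul_exp_le hbound (z := y * I) (by simp)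
        (by simpa using hy)
      rw [show ((y : ℂ) * I).im = y by simp] at hdecay
      refine hdecay.trans ?_
      rw [mul_assoc]
      exact le_mul_of_one_le_right (by positivity) (by
        rw [← Real.exp_add]; exact Real.one_le_exp (by positivity))
    · refine mul_le_mul (hbdd _ (by simp)) (Real.exp_le_exp.2 ?_) (by positivity) (by positivity)
      nlinarith [abs_nonneg y]
  have hg0 : EqOn g 0 {z | 0 < z.re} := eqOn_zero_of_imaginaryAxis_decay (sub_pos.2 hα)
    (hg.mono (by rw [closure_setOfPred_lt_re]; intro z (hz : 0 ≤ z.re); show -1 < z.re; linarith)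
      |>.diffContOnCl) hbdd him
  have hF0 : ∀ z : ℂ, 0 < z.re → F z = 0 := by
    intro z hz
    by_cases hS : sin (π * z) = 0
    · exact eq_zero_of_sin_pi_mul_eq_zero hzero (by linarith) hS
    · have hgz : removableDiv F (fun w => Complex.sin (π * w)) z = 0 := hg0 hz
      rwa [removableDiv_of_ne_zero (S := fun w => Complex.sin (π * w)) hS, div_eq_zero_iff,
        or_iff_left hS] at hgz
  have hFa : AnalyticOnNhd ℂ F {z | -1 < z.re} :=
    hF.analyticOnNhd (isOpen_lt continuous_const continuous_re)
  refine hFa.eqOn_zero_of_preconnected_of_eventuallyEq_zero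
    (convex_halfSpace_re_gt _).isPreconnected (z₀ := 1) (by simp) ?_
  filter_upwards [(isOpen_lt continuous_const continuous_re).mem_nhds (by simp : (0 : ℝ) < re 1)]
    with z hz using hF0 z hz

end Carlson

theorem stmt10_general (f : ℂ → ℂ) (C ρ α : ℝ) (hC : 0 < C)
    (hα0 : 0 ≤ α) (hα : α < π / 2)
    (hf : DifferentiableOn ℂ f {z : ℂ | 0 < z.re})
    (hfc : ContinuousOn f {z : ℂ | 0 ≤ z.re})
    (hfb : ∀ z : ℂ, 0 ≤ z.re → ‖f z‖ ≤ C * Real.exp (α * |z.im| + ρ * z.re))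
    (hzero : ∀ n : ℕ, 1 ≤ n → f (n : ℂ) = 0) :
    ∀ z : ℂ, 0 ≤ z.re → f z = 0 := by
  set F : ℂ → ℂ := fun z => f (z + 1) * cexp (-ρ * (z + 1))
  have hF : DifferentiableOn ℂ F {z | -1 < z.re} :=
    (hf.comp (differentiableOn_id.add_const 1) fun z (hz : -1 < z.re) => by
      show 0 < (z + 1).re; simp; linarith).mul
      ((differentiable_id.add_const 1).const_mul _).cexp.differentiableOn
  have hbound : ∀ z : ℂ, -1 < z.re → ‖F z‖ ≤ C * Real.exp (α * |z.im|) := by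
    intro z hz
    have hfz := hfb (z + 1) (by simp; linarith)
    simp only [add_re, add_im, one_re, one_im, add_zero] at hfz
    have hre : (-ρ * (z + 1)).re = -(ρ * (z.re + 1)) := by simp
    calc ‖F z‖ = ‖f (z + 1)‖ * Real.exp (-(ρ * (z.re + 1))) := by rw [norm_mul, norm_exp, hre]
      _ ≤ C * Real.exp (α * |z.im| + ρ * (z.re + 1)) * Real.exp (-(ρ * (z.re + 1))) := by gcongr
      _ = C * Real.exp (α * |z.im|) := by
          rw [mul_assoc, ← Real.exp_add, add_neg_cancel_right]
  have hF0 := eqOn_zero_of_natCast_eq_zero hC.le hα0 (by linarith [Real.pi_pos]) hF hbound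
    fun n => by simpa [F] using hzero (n + 1) (by omega)
  have hf0 : EqOn f 0 {z | 0 < z.re} := fun w (hw : 0 < w.re) => by
    simpa [F] using hF0 (x := w - 1) (by simp; linarith)
  exact fun z hz => hf0.of_subset_closure hfc continuousOn_const (fun w (hw : 0 < w.re) => hw.le)
    (by rw [closure_setOfPred_lt_re]) hz

/-- Lemma 4 of the paper (a Carlson-type theorem). A function in the
exponential space `E` (holomorphic on the open right half-plane, continuous on the closed
one, bounded by `C exp(α |Im z| + ρ Re z)` with `α < π/2`) vanishing at every positive
integer vanishes identically on `Re z ≥ 0`. -/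
theorem stmt10 (f : ℂ → ℂ) (C ρ α : ℝ) (hC : 0 < C) (hρ : 0 < ρ)
    (hα0 : 0 ≤ α) (hα : α < π / 2)
    (hf : DifferentiableOn ℂ f {z : ℂ | 0 < z.re})
    (hfc : ContinuousOn f {z : ℂ | 0 ≤ z.re})
    (hfb : ∀ z : ℂ, 0 ≤ z.re → ‖f z‖ ≤ C * Real.exp (α * |z.im| + ρ * z.re))
    (hzero : ∀ n : ℕ, 1 ≤ n → f (n : ℂ) = 0) :
    ∀ z : ℂ, 0 ≤ z.re → f z = 0 :=
  stmt10_general f C ρ α hC hα0 hα hf hfc hfb hzero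
end

section
/- Let b > 1 and let f : (0, ∞) → ℂ be continuously differentiable. Assume that for every σ ∈ (0, b) one has ∫_0^∞ e^{−x}·|f(x)|·x^{σ−1} dx < ∞ and ∫_0^∞ e^{−x}·|f′(x)|·x^{σ−1} dx < ∞, and that for every σ ∈ (0, b) the function e^{−x}·f(x)·x^{σ} tends to 0 as x → 0⁺ and as x → ∞. Define 𝒴_z f = (1/Γ(z)) ∫_0^∞ e^{−x}·f(x)·x^{z−1} dx. Then for every z with 1 < Re z < b one has 𝒴_z(f′) = 𝒴_z f − 𝒴_{z−1} f; that is, (1/Γ(z)) ∫_0^∞ e^{−x} f′(x) x^{z−1} dx = (1/Γ(z)) ∫_0^∞ e^{−x} f(x) x^{z−1} dx − (1/Γ(z−1)) ∫_0^∞ e^{−x} f(x) x^{z−2} dx. -/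
/-!
Integrate by parts against the kernel `u(x) = e^{-x} x^{z-1}`, whose derivative is
`-e^{-x} x^{z-1} + (z-1) e^{-x} x^{z-2}`. The boundary term `u f` vanishes at `0⁺` and at `∞`
by the decay hypotheses with `σ = Re z - 1`, so
`∫ e^{-x} f' x^{z-1} = ∫ e^{-x} f x^{z-1} - (z-1) ∫ e^{-x} f x^{z-2}`,
and `Γ(z) = (z-1) Γ(z-1)` turns the factor `(z-1)/Γ(z)` into `1/Γ(z-1)`.
-/

open Complex MeasureTheory Real Set Filter

lemma norm_exp_neg_mul_mul_cpow (g : ℝ → ℂ) (w : ℂ) {x : ℝ} (hx : 0 < x) :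
    ‖(Real.exp (-x) : ℂ) * g x * (x : ℂ) ^ w‖ = Real.exp (-x) * ‖g x‖ * x ^ w.re := by
  rw [norm_mul, norm_mul, Complex.norm_real, Real.norm_of_nonneg (Real.exp_pos _).le,
    Complex.norm_cpow_eq_rpow_re_of_pos hx]

lemma integrableOn_exp_neg_mul_mul_cpow {g : ℝ → ℂ} (hg : ContinuousOn g (Ioi 0)) (w : ℂ)
    (h : IntegrableOn (fun x : ℝ => Real.exp (-x) * ‖g x‖ * x ^ w.re) (Ioi 0)) :
    IntegrableOn (fun x : ℝ => (Real.exp (-x) : ℂ) * g x * (x : ℂ) ^ w) (Ioi 0) := by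
  refine h.mono' ?_ ?_
  · refine ContinuousOn.aestronglyMeasurable ?_ measurableSet_Ioi
    have hexp : Continuous fun x : ℝ => (Real.exp (-x) : ℂ) := by fun_prop
    refine (hexp.continuousOn.mul hg).mul fun x hx => ?_
    exact (continuousAt_ofReal_cpow_const _ _ (Or.inr (ne_of_gt hx))).continuousWithinAt
  · filter_upwards [ae_restrict_mem measurableSet_Ioi] with x hx
    exact (norm_exp_neg_mul_mul_cpow g w hx).le

lemma tendsto_exp_neg_mul_mul_cpow_zero {g : ℝ → ℂ} {w : ℂ} {l : Filter ℝ}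
    (hpos : ∀ᶠ x in l, 0 < x)
    (h : Tendsto (fun x : ℝ => (Real.exp (-x) : ℂ) * g x * ((x ^ w.re : ℝ) : ℂ)) l
      (nhds 0)) :
    Tendsto (fun x : ℝ => (Real.exp (-x) : ℂ) * g x * (x : ℂ) ^ w) l (nhds 0) := by
  rw [tendsto_zero_iff_norm_tendsto_zero] at h ⊢
  refine h.congr' ?_
  filter_upwards [hpos] with x hx
  rw [norm_exp_neg_mul_mul_cpow g w hx, norm_mul, norm_mul, Complex.norm_real,
    Complex.norm_real, Real.norm_of_nonneg (Real.exp_pos _).le,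
    Real.norm_of_nonneg (Real.rpow_pos_of_pos hx _).le]

lemma hasDerivAt_exp_neg_mul_cpow (w : ℂ) {x : ℝ} (hx : 0 < x) :
    HasDerivAt (fun y : ℝ => (Real.exp (-y) : ℂ) * (y : ℂ) ^ w)
      (-(Real.exp (-x) : ℂ) * (x : ℂ) ^ w + (Real.exp (-x) : ℂ) * (w * (x : ℂ) ^ (w - 1)))
      x := by
  have hexp : HasDerivAt (fun y : ℝ => (Real.exp (-y) : ℂ)) (-(Real.exp (-x) : ℂ)) x := by
    simpa using ((hasDerivAt_neg x).exp).ofReal_comp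
  have hcpow : HasDerivAt (fun y : ℝ => (y : ℂ) ^ w) (w * (x : ℂ) ^ (w - 1)) x := by
    simpa using ((hasStrictDerivAt_cpow_const (c := w)
      (ofReal_mem_slitPlane.mpr hx)).hasDerivAt.comp_ofReal (z := x))
  exact hexp.mul hcpow

theorem integral_exp_neg_mul_deriv_mul_cpow {f f' : ℝ → ℂ} {w : ℂ}
    (hderiv : ∀ x : ℝ, 0 < x → HasDerivAt f (f' x) x)
    (hf' : IntegrableOn (fun x : ℝ => (Real.exp (-x) : ℂ) * f' x * (x : ℂ) ^ w) (Ioi 0))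
    (hf : IntegrableOn (fun x : ℝ => (Real.exp (-x) : ℂ) * f x * (x : ℂ) ^ w) (Ioi 0))
    (hf_sub :
      IntegrableOn (fun x : ℝ => (Real.exp (-x) : ℂ) * f x * (x : ℂ) ^ (w - 1)) (Ioi 0))
    (hzero : Tendsto (fun x : ℝ => (Real.exp (-x) : ℂ) * f x * (x : ℂ) ^ w)
      (nhdsWithin 0 (Ioi 0)) (nhds 0))
    (hinfty : Tendsto (fun x : ℝ => (Real.exp (-x) : ℂ) * f x * (x : ℂ) ^ w) atTop (nhds 0)) :
    ∫ x in Ioi 0, (Real.exp (-x) : ℂ) * f' x * (x : ℂ) ^ w =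
      (∫ x in Ioi 0, (Real.exp (-x) : ℂ) * f x * (x : ℂ) ^ w) -
        w * ∫ x in Ioi 0, (Real.exp (-x) : ℂ) * f x * (x : ℂ) ^ (w - 1) := by
  set u : ℝ → ℂ := fun y => (Real.exp (-y) : ℂ) * (y : ℂ) ^ w
  set u' : ℝ → ℂ := fun x =>
    -(Real.exp (-x) : ℂ) * (x : ℂ) ^ w + (Real.exp (-x) : ℂ) * (w * (x : ℂ) ^ (w - 1))
  have huv' : (u * f') = fun x => (Real.exp (-x) : ℂ) * f' x * (x : ℂ) ^ w := by
    ext x; simp only [u, Pi.mul_apply]; ring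
  have hu'v : (u' * f) = fun x => w * ((Real.exp (-x) : ℂ) * f x * (x : ℂ) ^ (w - 1)) -
      (Real.exp (-x) : ℂ) * f x * (x : ℂ) ^ w := by
    ext x; simp only [u', Pi.mul_apply]; ring
  have huv : (u * f) = fun x => (Real.exp (-x) : ℂ) * f x * (x : ℂ) ^ w := by
    ext x; simp only [u, Pi.mul_apply]; ring
  have hibp := integral_Ioi_mul_deriv_eq_deriv_mul (u := u) (v := f) (u' := u') (v' := f')
    (fun x hx => hasDerivAt_exp_neg_mul_cpow w hx) hderiv
    (huv' ▸ hf') (hu'v ▸ (hf_sub.const_mul w).sub hf) (huv ▸ hzero) (huv ▸ hinfty)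
  simp only [← Pi.mul_apply u, ← Pi.mul_apply u', huv', hu'v] at hibp
  rw [hibp, integral_sub (hf_sub.const_mul w) hf, integral_const_mul]
  ring

lemma one_div_Gamma_mul_sub_one_mul {z : ℂ} (hz : z ≠ 1) (a : ℂ) :
    1 / Complex.Gamma z * ((z - 1) * a) = 1 / Complex.Gamma (z - 1) * a := by
  have hΓ : Complex.Gamma z = (z - 1) * Complex.Gamma (z - 1) := by
    simpa using Complex.Gamma_add_one (z - 1) (sub_ne_zero.mpr hz)
  rcases eq_or_ne (Complex.Gamma (z - 1)) 0 with h | h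
  · simp [hΓ, h]
  · rw [hΓ]
    field_simp [sub_ne_zero.mpr hz]

theorem stmt13_general (b : ℝ) (f f' : ℝ → ℂ)
    (hderiv : ∀ x : ℝ, 0 < x → HasDerivAt f (f' x) x)
    (hcont : ContinuousOn f' (Set.Ioi (0 : ℝ)))
    (hint : ∀ σ ∈ Set.Ioo (0 : ℝ) b,
      IntegrableOn (fun x : ℝ => Real.exp (-x) * ‖f x‖ * x ^ (σ - 1))
        (Set.Ioi (0 : ℝ)))
    (hint' : ∀ σ ∈ Set.Ioo (0 : ℝ) b,
      IntegrableOn (fun x : ℝ => Real.exp (-x) * ‖f' x‖ * x ^ (σ - 1))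
        (Set.Ioi (0 : ℝ)))
    (hzero : ∀ σ ∈ Set.Ioo (0 : ℝ) b,
      Filter.Tendsto (fun x : ℝ => (Real.exp (-x) : ℂ) * f x * ((x ^ σ : ℝ) : ℂ))
        (nhdsWithin 0 (Set.Ioi (0 : ℝ))) (nhds 0))
    (hinfty : ∀ σ ∈ Set.Ioo (0 : ℝ) b,
      Filter.Tendsto (fun x : ℝ => (Real.exp (-x) : ℂ) * f x * ((x ^ σ : ℝ) : ℂ))
        Filter.atTop (nhds 0)) :
    ∀ z : ℂ, 1 < z.re → z.re < b →
      (1 / Complex.Gamma z) *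
          ∫ x in Set.Ioi (0 : ℝ), (Real.exp (-x) : ℂ) * f' x * (x : ℂ) ^ (z - 1) =
        (1 / Complex.Gamma z) *
            (∫ x in Set.Ioi (0 : ℝ), (Real.exp (-x) : ℂ) * f x * (x : ℂ) ^ (z - 1)) -
          (1 / Complex.Gamma (z - 1)) *
            (∫ x in Set.Ioi (0 : ℝ), (Real.exp (-x) : ℂ) * f x * (x : ℂ) ^ (z - 2)) := by
  intro z hz1 hzb
  have hσ : z.re - 1 ∈ Ioo 0 b := ⟨by linarith, by linarith⟩
  have hfc : ContinuousOn f (Ioi 0) := fun x hx => (hderiv x hx).continuousAt.continuousWithinAt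
  have hre : (z - 1).re = z.re - 1 := by simp
  have hre' : (z - 1 - 1).re = z.re - 1 - 1 := by simp
  have hibp := integral_exp_neg_mul_deriv_mul_cpow (w := z - 1) hderiv
    (integrableOn_exp_neg_mul_mul_cpow hcont _ (hre ▸ hint' z.re ⟨by linarith, hzb⟩))
    (integrableOn_exp_neg_mul_mul_cpow hfc _ (hre ▸ hint z.re ⟨by linarith, hzb⟩))
    (integrableOn_exp_neg_mul_mul_cpow hfc _ (hre' ▸ hint _ hσ))
    (tendsto_exp_neg_mul_mul_cpow_zero self_mem_nhdsWithin (hre ▸ hzero _ hσ))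
    (tendsto_exp_neg_mul_mul_cpow_zero (eventually_gt_atTop 0) (hre ▸ hinfty _ hσ))
  have hz : z ≠ 1 := fun h => by simp [h] at hz1
  rw [hibp, mul_sub, one_div_Gamma_mul_sub_one_mul hz, show z - 1 - 1 = z - 2 by ring]

/-- The fundamental property of the Twisted Mellin transform
`𝒴_z f = (1/Γ(z)) ∫_0^∞ e^{-x} f(x) x^{z-1} dx`: it intertwines differentiation with the
backwards difference, `𝒴_z (f′) = 𝒴_z f − 𝒴_{z-1} f` for `1 < Re z < b`. -/
theorem stmt13 (b : ℝ) (hb : 1 < b) (f f' : ℝ → ℂ)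
    (hderiv : ∀ x : ℝ, 0 < x → HasDerivAt f (f' x) x)
    (hcont : ContinuousOn f' (Set.Ioi (0 : ℝ)))
    (hint : ∀ σ ∈ Set.Ioo (0 : ℝ) b,
      IntegrableOn (fun x : ℝ => Real.exp (-x) * ‖f x‖ * x ^ (σ - 1))
        (Set.Ioi (0 : ℝ)))
    (hint' : ∀ σ ∈ Set.Ioo (0 : ℝ) b,
      IntegrableOn (fun x : ℝ => Real.exp (-x) * ‖f' x‖ * x ^ (σ - 1))
        (Set.Ioi (0 : ℝ)))
    (hzero : ∀ σ ∈ Set.Ioo (0 : ℝ) b,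
      Filter.Tendsto (fun x : ℝ => (Real.exp (-x) : ℂ) * f x * ((x ^ σ : ℝ) : ℂ))
        (nhdsWithin 0 (Set.Ioi (0 : ℝ))) (nhds 0))
    (hinfty : ∀ σ ∈ Set.Ioo (0 : ℝ) b,
      Filter.Tendsto (fun x : ℝ => (Real.exp (-x) : ℂ) * f x * ((x ^ σ : ℝ) : ℂ))
        Filter.atTop (nhds 0)) :
    ∀ z : ℂ, 1 < z.re → z.re < b →
      (1 / Complex.Gamma z) *
          ∫ x in Set.Ioi (0 : ℝ), (Real.exp (-x) : ℂ) * f' x * (x : ℂ) ^ (z - 1) =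
        (1 / Complex.Gamma z) *
            (∫ x in Set.Ioi (0 : ℝ), (Real.exp (-x) : ℂ) * f x * (x : ℂ) ^ (z - 1)) -
          (1 / Complex.Gamma (z - 1)) *
            (∫ x in Set.Ioi (0 : ℝ), (Real.exp (-x) : ℂ) * f x * (x : ℂ) ^ (z - 2)) :=
  stmt13_general b f f' hderiv hcont hint hint' hzero hinfty
end

section
/- Let f : ℕ → ℂ. For q ∈ ℂ with Re q > 0 define the discrete differsum operator (A_q f)(n) = ∑_{j=1}^{n} f(j) · Γ(n − j + q) / ( Γ(q) · Γ(n − j + 1) ) for integers n ≥ 1, with (A_q f)(0) = 0. Then: (i) (A_1 f)(n) = ∑_{j=1}^{n} f(j) for all n; and (ii) for all q₁, q₂ ∈ ℂ with Re q₁ > 0 and Re q₂ > 0 and all n ≥ 0, (A_{q₂}(A_{q₁} f))(n) = (A_{q₁ + q₂} f)(n). That is, the operators A_q form a semigroup in q extending iterated summation. -/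
open Complex Finset

/-!
The weight `Γ(m + q) / (Γ(q) Γ(m + 1))` is the multiset coefficient `multichoose q m`, i.e. the
`m`-th coefficient of `(1 - X)^(-q)`. Hence `A_q` is multiplication of the generating function
`∑_{j ≥ 1} f(j) X^j` by `(1 - X)^(-q)`; `A_1` multiplies by `1 / (1 - X)`, which forms partial
sums, and the semigroup law is `(1 - X)^(-q₁) (1 - X)^(-q₂) = (1 - X)^(-(q₁ + q₂))`, i.e. the
Chu–Vandermonde identity for `multichoose`.
-/

/-- The discrete differsum operator of the paper restricted to the nonnegative integers:
`(A_q f)(n) = ∑_{j=1}^n f(j) Γ(n-j+q) / (Γ(q) Γ(n-j+1))`, and `(A_q f)(0) = 0`. -/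
noncomputable def differsum (q : ℂ) (f : ℕ → ℂ) (n : ℕ) : ℂ :=
  ∑ j ∈ Finset.Icc 1 n,
    f j * Complex.Gamma (((n - j : ℕ) : ℂ) + q) /
      (Complex.Gamma q * Complex.Gamma (((n - j : ℕ) : ℂ) + 1))

theorem Ring.multichoose_add {R : Type*} [CommRing R] [BinomialRing R] (r s : R) (k : ℕ) :
    Ring.multichoose (r + s) k =
      ∑ ij ∈ antidiagonal k, Ring.multichoose r ij.1 * Ring.multichoose s ij.2 := by
  have hsign (x : R) (n : ℕ) : Ring.multichoose x n = Int.negOnePow n • Ring.choose (-x) n := by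
    rw [Ring.choose_neg', smul_smul, ← Int.negOnePow_add, Int.negOnePow_even _ ⟨n, rfl⟩, one_smul]
  rw [hsign, neg_add, Ring.add_choose_eq _ (Commute.all _ _), smul_sum]
  refine sum_congr rfl fun ij hij => ?_
  rw [hsign, hsign, smul_mul_smul_comm, ← Int.negOnePow_add, ← Nat.cast_add,
    mem_antidiagonal.mp hij]

/-- The power series `(1 - X)^(-r)`. -/
noncomputable def multichooseSeries {R : Type*} [CommRing R] [BinomialRing R] (r : R) :
    PowerSeries R :=
  PowerSeries.mk (Ring.multichoose r)

theorem multichooseSeries_add {R : Type*} [CommRing R] [BinomialRing R] (r s : R) :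
    multichooseSeries (r + s) = multichooseSeries r * multichooseSeries s := by
  ext k
  simp only [multichooseSeries, PowerSeries.coeff_mul, PowerSeries.coeff_mk, Ring.multichoose_add]

theorem Complex.ne_neg_natCast_of_re_pos {q : ℂ} (hq : 0 < q.re) (k : ℕ) : q ≠ -k := by
  rintro rfl
  simp only [neg_re, natCast_re, Left.neg_pos_iff] at hq
  linarith [(k.cast_nonneg : (0 : ℝ) ≤ k)]

theorem Complex.Gamma_div_eq_multichoose {q : ℂ} (hq : ∀ k : ℕ, q ≠ -k) (m : ℕ) :
    Gamma (m + q) / (Gamma q * Gamma (m + 1)) = Ring.multichoose q m := by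
  have hfact : (m.factorial : ℂ) ≠ 0 := by exact_mod_cast m.factorial_ne_zero
  have hpoch := Ring.factorial_nsmul_multichoose_eq_ascPochhammer q m
  rw [Polynomial.ascPochhammer_smeval_eq_eval, ← Gamma_add_nat_div_Gamma_eq q hq,
    nsmul_eq_mul] at hpoch
  rw [Gamma_nat_eq_factorial, add_comm, ← div_div, ← hpoch, mul_div_cancel_left₀ _ hfact]

theorem differsum_eq_sum_multichoose {q : ℂ} (hq : ∀ k : ℕ, q ≠ -k) (f : ℕ → ℂ) (n : ℕ) :
    differsum q f n = ∑ j ∈ Icc 1 n, f j * Ring.multichoose q (n - j) := by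
  refine sum_congr rfl fun j _ => ?_
  rw [mul_div_assoc, Gamma_div_eq_multichoose hq]

/-- Discards `f 0`, which `differsum` never reads. -/
noncomputable def genFunPos (f : ℕ → ℂ) : PowerSeries ℂ :=
  PowerSeries.mk fun j => if j = 0 then 0 else f j

theorem genFunPos_differsum {q : ℂ} (hq : ∀ k : ℕ, q ≠ -k) (f : ℕ → ℂ) :
    genFunPos (differsum q f) = genFunPos f * multichooseSeries q := by
  ext n
  have hzero : differsum q f 0 = 0 := by simp [differsum]
  rw [genFunPos, PowerSeries.coeff_mul, Nat.sum_antidiagonal_eq_sum_range_succ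
    (fun i j => PowerSeries.coeff i (genFunPos f) * PowerSeries.coeff j (multichooseSeries q)),
    Nat.range_succ_eq_Icc_zero, ← add_sum_Ioc_eq_sum_Icc n.zero_le, ← Icc_add_one_left_eq_Ioc]
  simp only [genFunPos, multichooseSeries, PowerSeries.coeff_mk, zero_add, if_true, zero_mul]
  rw [ite_eq_right_iff.mpr fun h => h ▸ hzero, differsum_eq_sum_multichoose hq]
  refine sum_congr rfl fun j hj => ?_
  rw [if_neg (by simp at hj; omega)]

/-- The discrete differsum operators `A_q` extend iterated summation
(`A_1` is the partial-sum operator) and form a semigroup in `q`: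
`A_{q₂} ∘ A_{q₁} = A_{q₁+q₂}` for `Re q₁ > 0`, `Re q₂ > 0`. -/
theorem stmt16 (f : ℕ → ℂ) :
    (∀ n : ℕ, differsum 1 f n = ∑ j ∈ Finset.Icc 1 n, f j) ∧
    (∀ q₁ q₂ : ℂ, 0 < q₁.re → 0 < q₂.re → ∀ n : ℕ,
      differsum q₂ (differsum q₁ f) n = differsum (q₁ + q₂) f n) := by
  constructor
  · intro n
    rw [differsum_eq_sum_multichoose (ne_neg_natCast_of_re_pos (q := 1) (by simp))]
    simp only [Ring.multichoose_one, mul_one]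
  · intro q₁ q₂ h₁ h₂ n
    have h₁₂ : 0 < (q₁ + q₂).re := by rw [add_re]; positivity
    have hgen : genFunPos (differsum q₂ (differsum q₁ f)) = genFunPos (differsum (q₁ + q₂) f) := by
      rw [genFunPos_differsum (ne_neg_natCast_of_re_pos h₂),
        genFunPos_differsum (ne_neg_natCast_of_re_pos h₁),
        genFunPos_differsum (ne_neg_natCast_of_re_pos h₁₂), mul_assoc, multichooseSeries_add]
    rcases n with _ | n
    · simp [differsum]
    · simpa [genFunPos] using congrArg (PowerSeries.coeff (n + 1)) hgen
end
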